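/- arXiv:1502.02588 — 13 statements merged into one kernel-verified Lean document; each statement's English description precedes it below -/
import Mathlib

section
/- Let p be a function assigning to each integer n ≥ 2 a real number p(n) ∈ (0,1), such that p(m·n) = p(m)·p(n) for all integers m, n ≥ 2, and such that p is nonincreasing (m ≤ n implies p(n) ≤ p(m)). Then there exists γ > 0 such that p(n) = n^{−1/γ} for all n ≥ 2. -/
/-- Completely multiplicative, nonincreasing norming constants `p n ∈ (0,1)`
(for `n ≥ 2`) must be of the form `p n = n ^ (-1/γ)` for some `γ > 0`. -/
theorem norming_constants_power_form (p : ℕ → ℝ)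
    (hmem : ∀ n : ℕ, 2 ≤ n → p n ∈ Set.Ioo (0 : ℝ) 1)
    (hmul : ∀ m n : ℕ, 2 ≤ m → 2 ≤ n → p (m * n) = p m * p n)
    (hmono : ∀ m n : ℕ, 2 ≤ m → m ≤ n → p n ≤ p m) :
    ∃ γ : ℝ, 0 < γ ∧ ∀ n : ℕ, 2 ≤ n → p n = (n : ℝ) ^ (-(1 / γ)) := by
  have hp2 := hmem 2 le_rfl
  have hf2 : Real.log (p 2) < 0 := Real.log_neg hp2.1 hp2.2
  have hlog2 : (0:ℝ) < Real.log 2 := Real.log_pos (by norm_num)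
  -- powers
  have hpow : ∀ n : ℕ, 2 ≤ n → ∀ k : ℕ, 1 ≤ k → p (n ^ k) = p n ^ k := by
    intro n hn k hk
    induction k with
    | zero => omega
    | succ k ih =>
      rcases Nat.eq_or_lt_of_le hk with h | h
      · simp [← h]
      · have hk1 : 1 ≤ k := by omega
        have h2nk : 2 ≤ n ^ k := le_trans hn (Nat.le_self_pow (by omega) n)
        rw [pow_succ, pow_succ, hmul _ _ h2nk hn, ih hk1]
  -- key: log (p n) = log n * (log (p 2) / log 2)
  have hkey : ∀ n : ℕ, 2 ≤ n →
      Real.log (p n) = Real.log n * (Real.log (p 2) / Real.log 2) := by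
    intro n hn
    have hpn := hmem n hn
    set fn := Real.log (p n) with hfn
    set f2 := Real.log (p 2) with hf2d
    have hlogn : Real.log 2 ≤ Real.log n := by
      apply Real.log_le_log (by norm_num)
      exact_mod_cast hn
    set t : ℝ := Real.log n / Real.log 2 with ht
    have ht1 : 1 ≤ t := (one_le_div hlog2).2 hlogn
    have hbound : ∀ k : ℕ, 1 ≤ k → |fn - t * f2| ≤ (-f2) / k := by
      intro k hk
      set l : ℕ := ⌊(k : ℝ) * t⌋₊ with hl
      have hkt0 : (0:ℝ) ≤ (k:ℝ) * t := by positivity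
      have hl1 : (l : ℝ) ≤ (k:ℝ) * t := Nat.floor_le hkt0
      have hl2 : (k:ℝ) * t < l + 1 := Nat.lt_floor_add_one _
      have hlk : k ≤ l := by
        rw [hl, Nat.le_floor_iff hkt0]
        nlinarith
      have hl1' : 1 ≤ l := le_trans hk hlk
      -- 2^l ≤ n^k
      have hnk0 : (0:ℝ) < (n:ℝ) := by positivity
      have hle1 : (2:ℕ) ^ l ≤ n ^ k := by
        have : ((2:ℕ) ^ l : ℝ) ≤ ((n ^ k : ℕ) : ℝ) := by
          push_cast
          have h1 : Real.log ((2:ℝ) ^ l) ≤ Real.log ((n:ℝ) ^ k) := by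
            rw [Real.log_pow, Real.log_pow]
            have : (l:ℝ) * Real.log 2 ≤ (k:ℝ) * t * Real.log 2 :=
              mul_le_mul_of_nonneg_right hl1 hlog2.le
            rw [ht] at this
            calc (l:ℝ) * Real.log 2 ≤ (k:ℝ) * (Real.log n / Real.log 2) * Real.log 2 := this
              _ = (k:ℝ) * Real.log n := by field_simp
          exact (Real.log_le_log_iff (by positivity) (by positivity)).1 h1
        exact_mod_cast this
      -- n^k ≤ 2^(l+1)
      have hle2 : n ^ k ≤ (2:ℕ) ^ (l + 1) := by
        have : ((n ^ k : ℕ) : ℝ) ≤ ((2:ℕ) ^ (l+1) : ℝ) := by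
          push_cast
          have h1 : Real.log ((n:ℝ) ^ k) ≤ Real.log ((2:ℝ) ^ (l+1)) := by
            rw [Real.log_pow, Real.log_pow]
            have : (k:ℝ) * t * Real.log 2 ≤ ((l:ℝ)+1) * Real.log 2 :=
              mul_le_mul_of_nonneg_right hl2.le hlog2.le
            rw [ht] at this
            have e : (k:ℝ) * (Real.log n / Real.log 2) * Real.log 2 = (k:ℝ) * Real.log n := by
              field_simp
            rw [e] at this
            push_cast
            linarith
          exact (Real.log_le_log_iff (by positivity) (by positivity)).1 h1
        exact_mod_cast this
      have h2nk : 2 ≤ n ^ k := le_trans hn (Nat.le_self_pow (by omega) n)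
      have h22l : 2 ≤ (2:ℕ) ^ l := by
        calc 2 = 2 ^ 1 := rfl
          _ ≤ 2 ^ l := Nat.pow_le_pow_right (by norm_num) hl1'
      -- monotonicity inequalities
      have hA : p (n ^ k) ≤ p (2 ^ l) := hmono _ _ h22l hle1
      have hB : p (2 ^ (l+1)) ≤ p (n ^ k) := hmono _ _ h2nk hle2
      rw [hpow n hn k hk, hpow 2 le_rfl l hl1', hpow 2 le_rfl (l+1) (by omega)] at *
      have hpn0 : 0 < p n := hpn.1
      have hp20 : 0 < p 2 := hp2.1
      have hA' : (k:ℝ) * fn ≤ (l:ℝ) * f2 := by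
        have := Real.log_le_log (by positivity) hA
        rwa [Real.log_pow, Real.log_pow] at this
      have hB' : ((l:ℝ)+1) * f2 ≤ (k:ℝ) * fn := by
        have := Real.log_le_log (by positivity) hB
        rwa [Real.log_pow, Real.log_pow, Nat.cast_add, Nat.cast_one] at this
      have hk0 : (0:ℝ) < k := by exact_mod_cast hk
      rw [abs_le]
      constructor
      · have h : f2 / k ≤ fn - t * f2 := by
          rw [div_le_iff₀ hk0]; nlinarith
        have e : -(-f2 / (k:ℝ)) = f2 / k := by ring
        linarith [e ▸ h]
      · rw [le_div_iff₀ hk0]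
        nlinarith
    -- conclude fn = t * f2
    have hx : fn - t * f2 = 0 := by
      by_contra hx
      have habs : 0 < |fn - t * f2| := abs_pos.2 hx
      obtain ⟨k, hk⟩ := exists_nat_gt ((-f2) / |fn - t * f2|)
      have h0 : (0:ℝ) < (-f2) / |fn - t * f2| := div_pos (by linarith) habs
      have hk1 : 1 ≤ k := by
        rcases Nat.eq_zero_or_pos k with h | h
        · exfalso; rw [h] at hk; push_cast at hk; linarith
        · exact h
      have := hbound k hk1
      have hk0 : (0:ℝ) < k := by exact_mod_cast hk1
      rw [div_lt_iff₀ habs] at hk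
      rw [le_div_iff₀ hk0] at this
      nlinarith
    have : fn = t * f2 := by linarith
    rw [this, ht]; ring
  -- assemble
  refine ⟨Real.log 2 / (-Real.log (p 2)), div_pos hlog2 (by linarith), fun n hn => ?_⟩
  have hpn := hmem n hn
  have hexp : -(1 / (Real.log 2 / (-Real.log (p 2)))) = Real.log (p 2) / Real.log 2 := by
    field_simp
  rw [hexp, Real.rpow_def_of_pos (by positivity : (0:ℝ) < (n:ℝ))]
  rw [← Real.exp_log hpn.1, hkey n hn]
end

section
/- For κ ∈ [0,1) and p ∈ (0,1), let Q_p(z) = ((1−p)+(p−κ)z)/((1−pκ)−κ(1−p)z). Then for all p₁, p₂ ∈ (0,1) and all z ∈ [0,1], Q_{p₁}(Q_{p₂}(z)) = Q_{p₁·p₂}(z). In particular the family {Q_p : p ∈ (0,1)} forms a commutative semigroup under composition. -/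
/-- The probability generating function of the modified geometric
distribution `𝒢(p,κ)`. -/
noncomputable def modGeomPGF (κ p z : ℝ) : ℝ :=
  ((1 - p) + (p - κ) * z) / ((1 - p * κ) - κ * (1 - p) * z)

/-!
`Q_p` is the Möbius map fixing `1` and `1/κ` with multiplier `p` at `1`: in the coordinate
`φ(z) = (1 - z)/(1 - κ z)` it becomes `φ ↦ p φ`, so composing two of them multiplies the
multipliers. The coordinate is injective as long as `κ ≠ 1`, and all denominators stay positive
because each `Q_p` maps `(-∞, 1]` into itself.
-/

noncomputable def modGeomCoord (κ z : ℝ) : ℝ :=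
  (1 - z) / (1 - κ * z)

section

variable {κ p z : ℝ}

lemma modGeomPGF_denom_pos (hκ : κ ∈ Set.Ico (0 : ℝ) 1) (hp : p ≤ 1) (hz : z ≤ 1) :
    0 < (1 - p * κ) - κ * (1 - p) * z := by
  obtain ⟨hκ0, hκ1⟩ := hκ
  -- the denominator equals `(1 - κ) + κ (1 - p) (1 - z)`
  nlinarith [mul_nonneg (mul_nonneg hκ0 (sub_nonneg.2 hp)) (sub_nonneg.2 hz)]

lemma one_sub_modGeomPGF (hD : (1 - p * κ) - κ * (1 - p) * z ≠ 0) :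
    1 - modGeomPGF κ p z = p * (1 - κ) * (1 - z) / ((1 - p * κ) - κ * (1 - p) * z) := by
  rw [modGeomPGF, eq_div_iff hD, sub_mul, div_mul_cancel₀ _ hD]
  ring

lemma one_sub_mul_modGeomPGF (hD : (1 - p * κ) - κ * (1 - p) * z ≠ 0) :
    1 - κ * modGeomPGF κ p z = (1 - κ) * (1 - κ * z) / ((1 - p * κ) - κ * (1 - p) * z) := by
  rw [modGeomPGF, mul_div_assoc', eq_div_iff hD, sub_mul, div_mul_cancel₀ _ hD]
  ring

lemma modGeomPGF_le_one (hκ : κ ∈ Set.Ico (0 : ℝ) 1) (hp : p ∈ Set.Icc (0 : ℝ) 1) (hz : z ≤ 1) :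
    modGeomPGF κ p z ≤ 1 := by
  have hD := modGeomPGF_denom_pos hκ hp.2 hz
  rw [← sub_nonneg, one_sub_modGeomPGF hD.ne']
  have := hκ.2
  exact div_nonneg (mul_nonneg (mul_nonneg hp.1 (by linarith)) (by linarith)) hD.le

lemma modGeomCoord_modGeomPGF (hκ : κ ≠ 1) (hD : (1 - p * κ) - κ * (1 - p) * z ≠ 0) :
    modGeomCoord κ (modGeomPGF κ p z) = p * modGeomCoord κ z := by
  have hκ' : 1 - κ ≠ 0 := sub_ne_zero.2 (Ne.symm hκ)
  rw [modGeomCoord, modGeomCoord, one_sub_modGeomPGF hD, one_sub_mul_modGeomPGF hD,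
    div_div_div_cancel_right₀ hD, mul_right_comm, mul_comm (1 - κ), mul_div_mul_right _ _ hκ',
    mul_div_assoc]

lemma eq_of_modGeomCoord_eq (hκ : κ ≠ 1) {w : ℝ} (hz : 1 - κ * z ≠ 0) (hw : 1 - κ * w ≠ 0)
    (h : modGeomCoord κ z = modGeomCoord κ w) : z = w := by
  rw [modGeomCoord, modGeomCoord, div_eq_div_iff hz hw] at h
  have : (1 - κ) * (z - w) = 0 := by linear_combination -h
  rcases mul_eq_zero.1 this with h | h
  · exact absurd (sub_eq_zero.1 h).symm hκ
  · exact sub_eq_zero.1 h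

end

/-- The modified geometric thinning operators form a commutative semigroup
under composition: `Q_{p₁} ∘ Q_{p₂} = Q_{p₁ p₂}`. -/
theorem modGeomPGF_comp (κ : ℝ) (hκ : κ ∈ Set.Ico (0 : ℝ) 1)
    (p₁ p₂ : ℝ) (h₁ : p₁ ∈ Set.Ioo (0 : ℝ) 1) (h₂ : p₂ ∈ Set.Ioo (0 : ℝ) 1)
    (z : ℝ) (hz : z ∈ Set.Icc (0 : ℝ) 1) :
    modGeomPGF κ p₁ (modGeomPGF κ p₂ z) = modGeomPGF κ (p₁ * p₂) z := by
  have hp₁ : p₁ ∈ Set.Icc (0 : ℝ) 1 := Set.Ioo_subset_Icc_self h₁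
  have hp₂ : p₂ ∈ Set.Icc (0 : ℝ) 1 := Set.Ioo_subset_Icc_self h₂
  have hp : p₁ * p₂ ∈ Set.Icc (0 : ℝ) 1 :=
    ⟨mul_nonneg hp₁.1 hp₂.1, mul_le_one₀ hp₁.2 hp₂.1 hp₂.2⟩
  have hκ1 : κ ≠ 1 := hκ.2.ne
  have hw := modGeomPGF_le_one hκ hp₂ hz.2
  -- at `p = 0` the denominator is `1 - κ x`
  have one_sub_mul_ne_zero {x : ℝ} (hx : x ≤ 1) : 1 - κ * x ≠ 0 := by
    simpa using (modGeomPGF_denom_pos hκ zero_le_one hx).ne'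
  refine eq_of_modGeomCoord_eq hκ1 (one_sub_mul_ne_zero (modGeomPGF_le_one hκ hp₁ hw))
    (one_sub_mul_ne_zero (modGeomPGF_le_one hκ hp hz.2)) ?_
  rw [modGeomCoord_modGeomPGF hκ1 (modGeomPGF_denom_pos hκ hp₁.2 hw).ne',
    modGeomCoord_modGeomPGF hκ1 (modGeomPGF_denom_pos hκ hp₂.2 hz.2).ne',
    modGeomCoord_modGeomPGF hκ1 (modGeomPGF_denom_pos hκ hp.2 hz.2).ne', mul_assoc]
end

section
/- There exists a probability distribution (q_m)_{m≥0} on the non-negative integers such that for every z ∈ [0,1), ∑_{m=0}^∞ q_m z^m = (2√(2−z) − 2)/(1−z). That is, the function Q_{1/2}(z) = (−2 + 2√(2−z))/(1−z) is a probability generating function. -/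
open Finset

namespace ChebyshevThinningAux

lemma catalan_le_four_pow (n : ℕ) : (catalan n : ℝ) ≤ 4 ^ n := by
  have h1 : catalan n ≤ n.centralBinom := by
    rw [catalan_eq_centralBinom_div]
    exact Nat.div_le_self _ _
  have h2 : n.centralBinom ≤ 4 ^ n := by
    have hmem : n ∈ range (2 * n + 1) := by
      simp [Nat.lt_succ_iff]; omega
    have : (2 * n).choose n ≤ ∑ m ∈ range (2 * n + 1), (2 * n).choose m :=
      Finset.single_le_sum (fun i _ => Nat.zero_le _) hmem
    rw [Nat.sum_range_choose] at this
    calc n.centralBinom = (2 * n).choose n := rfl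
      _ ≤ 2 ^ (2 * n) := this
      _ = 4 ^ n := by rw [pow_mul]; norm_num
  exact_mod_cast h1.trans h2

lemma catalan_term_le {x : ℝ} (hx0 : 0 ≤ x) (hx : x ≤ 1 / 8) (n : ℕ) :
    (catalan n : ℝ) * x ^ n ≤ (1 / 2 : ℝ) ^ n := by
  have h1 : (catalan n : ℝ) * x ^ n ≤ 4 ^ n * (1 / 8 : ℝ) ^ n := by
    apply mul_le_mul (catalan_le_four_pow n) (pow_le_pow_left₀ hx0 hx n)
      (pow_nonneg hx0 n) (by positivity)
  calc (catalan n : ℝ) * x ^ n ≤ 4 ^ n * (1 / 8 : ℝ) ^ n := h1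
    _ = (1 / 2 : ℝ) ^ n := by rw [← mul_pow]; norm_num

lemma summable_catalan {x : ℝ} (hx0 : 0 ≤ x) (hx : x ≤ 1 / 8) :
    Summable (fun n => (catalan n : ℝ) * x ^ n) :=
  Summable.of_nonneg_of_le (fun n => by positivity) (catalan_term_le hx0 hx)
    (summable_geometric_of_lt_one (by norm_num) (by norm_num))

lemma tsum_catalan_le_two {x : ℝ} (hx0 : 0 ≤ x) (hx : x ≤ 1 / 8) :
    (∑' n, (catalan n : ℝ) * x ^ n) ≤ 2 := by
  have h := Summable.tsum_le_tsum (catalan_term_le hx0 hx) (summable_catalan hx0 hx)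
    (summable_geometric_of_lt_one (by norm_num) (by norm_num))
  rw [tsum_geometric_of_lt_one (by norm_num) (by norm_num)] at h
  norm_num at h
  linarith

/-- The Catalan generating function identity: `√(1-4x) = 1 - 2x ∑ Cₙ xⁿ` for `0 ≤ x ≤ 1/8`. -/
lemma sqrt_eq {x : ℝ} (hx0 : 0 ≤ x) (hx : x ≤ 1 / 8) :
    Real.sqrt (1 - 4 * x) = 1 - 2 * x * ∑' n, (catalan n : ℝ) * x ^ n := by
  set f : ℝ := ∑' n, (catalan n : ℝ) * x ^ n with hf
  have hsum : Summable (fun n => (catalan n : ℝ) * x ^ n) := summable_catalan hx0 hx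
  have hnorm : Summable (fun n => ‖(catalan n : ℝ) * x ^ n‖) := by
    have : (fun n => ‖(catalan n : ℝ) * x ^ n‖) = fun n => (catalan n : ℝ) * x ^ n := by
      funext n
      rw [Real.norm_eq_abs, abs_of_nonneg (by positivity)]
    rw [this]; exact hsum
  -- Cauchy product
  have hsq : f * f = ∑' n, (catalan (n + 1) : ℝ) * x ^ n := by
    rw [hf, tsum_mul_tsum_eq_tsum_sum_antidiagonal_of_summable_norm hnorm hnorm]
    congr 1
    funext n
    rw [catalan_succ' n, Nat.cast_sum]
    rw [Finset.sum_mul]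
    apply Finset.sum_congr rfl
    intro ij hij
    have hij' : ij.1 + ij.2 = n := Finset.HasAntidiagonal.mem_antidiagonal.mp hij
    rw [Nat.cast_mul, ← hij', pow_add]
    ring
  -- shift
  have hshift : x * ∑' n, (catalan (n + 1) : ℝ) * x ^ n = f - 1 := by
    have h0 : f = (catalan 0 : ℝ) * x ^ 0 + ∑' n, (catalan (n + 1) : ℝ) * x ^ (n + 1) :=
      Summable.tsum_eq_zero_add hsum
    have h1 : ∑' n, (catalan (n + 1) : ℝ) * x ^ (n + 1)
        = x * ∑' n, (catalan (n + 1) : ℝ) * x ^ n := by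
      rw [← tsum_mul_left]
      congr 1; funext n; ring
    rw [h1] at h0
    simp only [catalan_zero, Nat.cast_one, pow_zero, mul_one] at h0
    linarith
  have hkey : x * f ^ 2 = f - 1 := by
    rw [pow_two, hsq]
    exact hshift
  have hfnonneg : 0 ≤ f := tsum_nonneg (fun n => by positivity)
  have hfle : f ≤ 2 := tsum_catalan_le_two hx0 hx
  have hsign : 0 ≤ 1 - 2 * x * f := by nlinarith
  have hsqeq : (1 - 2 * x * f) ^ 2 = 1 - 4 * x := by nlinarith [hkey]
  rw [← hsqeq, Real.sqrt_sq hsign]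

/-- The coefficient sequence whose tails give the PGF coefficients. -/
noncomputable def d : ℕ → ℝ
  | 0 => 0
  | n + 1 => Real.sqrt 2 / 2 * ((catalan n : ℝ) / 8 ^ n)

lemma d_nonneg (k : ℕ) : 0 ≤ d k := by
  cases k with
  | zero => simp [d]
  | succ n =>
    have h2 : (0:ℝ) ≤ Real.sqrt 2 := Real.sqrt_nonneg 2
    simp only [d]
    positivity

lemma hasSum_d {z : ℝ} (h0 : 0 ≤ z) (h1 : z ≤ 1) :
    HasSum (fun k => d k * z ^ k) (2 * Real.sqrt 2 - 2 * Real.sqrt (2 - z)) := by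
  have hx0 : (0:ℝ) ≤ z / 8 := by linarith
  have hx : z / 8 ≤ 1 / 8 := by linarith
  set s : ℝ := ∑' n, (catalan n : ℝ) * (z / 8) ^ n with hs
  have hsqrt : Real.sqrt (1 - 4 * (z / 8)) = 1 - 2 * (z / 8) * s := sqrt_eq hx0 hx
  have hsum : HasSum (fun n => (catalan n : ℝ) * (z / 8) ^ n) s :=
    (summable_catalan hx0 hx).hasSum
  have hsum2 : HasSum (fun n => Real.sqrt 2 * z / 2 * ((catalan n : ℝ) * (z / 8) ^ n))
      (Real.sqrt 2 * z / 2 * s) := hsum.mul_left _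
  have hterm : (fun n => Real.sqrt 2 * z / 2 * ((catalan n : ℝ) * (z / 8) ^ n))
      = fun n => d (n + 1) * z ^ (n + 1) := by
    funext n
    simp only [d, div_pow, pow_succ]
    field_simp
  rw [hterm] at hsum2
  have hval : Real.sqrt 2 * z / 2 * s = 2 * Real.sqrt 2 - 2 * Real.sqrt (2 - z) := by
    have h2z : Real.sqrt (2 - z) = Real.sqrt 2 * Real.sqrt (1 - z / 2) := by
      have h22 : (2:ℝ) - z = 2 * (1 - z / 2) := by ring
      rw [h22, Real.sqrt_mul (by norm_num : (0:ℝ) ≤ 2)]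
    have h14 : (1 : ℝ) - 4 * (z / 8) = 1 - z / 2 := by ring
    rw [h14] at hsqrt
    rw [h2z, hsqrt]
    ring
  rw [hval] at hsum2
  have := (hasSum_nat_add_iff (f := fun k => d k * z ^ k) 1).mp hsum2
  simpa [d] using this

lemma hasSum_d_one : HasSum d (2 * Real.sqrt 2 - 2) := by
  have h := hasSum_d (z := 1) (by norm_num) le_rfl
  simp only [one_pow, mul_one] at h
  have : Real.sqrt (2 - 1) = 1 := by norm_num
  rw [this] at h
  convert h using 1
  ring

/-- The PGF coefficients: tails of the sequence `d`. -/
noncomputable def q (m : ℕ) : ℝ := (2 * Real.sqrt 2 - 2) - ∑ k ∈ range (m + 1), d k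

lemma q_nonneg (m : ℕ) : 0 ≤ q m := by
  have h := Summable.sum_le_tsum (range (m + 1)) (fun k _ => d_nonneg k) hasSum_d_one.summable
  rw [hasSum_d_one.tsum_eq] at h
  simpa [q] using h

lemma q_le (m : ℕ) : q m ≤ 2 * Real.sqrt 2 - 2 := by
  have h : 0 ≤ ∑ k ∈ range (m + 1), d k := Finset.sum_nonneg (fun k _ => d_nonneg k)
  simp only [q]; linarith

lemma T_nonneg : (0:ℝ) ≤ 2 * Real.sqrt 2 - 2 := by
  nlinarith [Real.sq_sqrt (by norm_num : (0:ℝ) ≤ 2), Real.sqrt_nonneg 2]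

lemma summable_q_geom {z : ℝ} (h0 : 0 ≤ z) (h1 : z < 1) :
    Summable (fun m => q m * z ^ m) := by
  apply Summable.of_nonneg_of_le
    (fun m => mul_nonneg (q_nonneg m) (pow_nonneg h0 m))
    (fun m => mul_le_mul_of_nonneg_right (q_le m) (pow_nonneg h0 m))
  exact (summable_geometric_of_lt_one h0 h1).mul_left _

lemma pgf_eq {z : ℝ} (h0 : 0 ≤ z) (h1 : z < 1) :
    ∑' m, q m * z ^ m = (2 * Real.sqrt (2 - z) - 2) / (1 - z) := by
  set A : ℝ := ∑' m, q m * z ^ m with hA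
  have hQ : Summable (fun m => q m * z ^ m) := summable_q_geom h0 h1
  have hQ1 : Summable (fun m => q (m + 1) * z ^ (m + 1)) :=
    (summable_nat_add_iff (f := fun m => q m * z ^ m) 1).mpr hQ
  have hdsum : Summable (fun k => d k * z ^ k) := (hasSum_d h0 h1.le).summable
  have hd1 : Summable (fun m => d (m + 1) * z ^ (m + 1)) :=
    (summable_nat_add_iff (f := fun k => d k * z ^ k) 1).mpr hdsum
  -- zA = ∑ q m z^{m+1}
  have hzA : z * A = ∑' m, q m * z ^ (m + 1) := by
    rw [hA, ← tsum_mul_left]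
    congr 1; funext m; ring
  have hA0 : A = q 0 * z ^ 0 + ∑' m, q (m + 1) * z ^ (m + 1) := Summable.tsum_eq_zero_add hQ
  have hQz1 : Summable (fun m => q m * z ^ (m + 1)) := by
    have : (fun m => q m * z ^ (m + 1)) = fun m => z * (q m * z ^ m) := by
      funext m; ring
    rw [this]; exact hQ.mul_left z
  have hdiff : A - z * A = q 0 - ∑' m, d (m + 1) * z ^ (m + 1) := by
    rw [hzA, hA0, add_sub_assoc, ← Summable.tsum_sub hQ1 hQz1]
    have : (fun m => q (m + 1) * z ^ (m + 1) - q m * z ^ (m + 1))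
        = fun m => -(d (m + 1) * z ^ (m + 1)) := by
      funext m
      have : q (m + 1) - q m = -(d (m + 1)) := by
        simp only [q, Finset.sum_range_succ]
        ring
      have hh : q (m + 1) = q m - d (m + 1) := by linarith
      rw [hh]; ring
    rw [this, tsum_neg]
    ring
  have hdz : ∑' k, d k * z ^ k = d 0 * z ^ 0 + ∑' m, d (m + 1) * z ^ (m + 1) :=
    Summable.tsum_eq_zero_add hdsum
  have hdval : ∑' k, d k * z ^ k = 2 * Real.sqrt 2 - 2 * Real.sqrt (2 - z) :=
    (hasSum_d h0 h1.le).tsum_eq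
  have hq0 : q 0 = (2 * Real.sqrt 2 - 2) - d 0 := by
    simp [q]
  have hmain : (1 - z) * A = 2 * Real.sqrt (2 - z) - 2 := by
    have hd0 : d 0 = 0 := rfl
    have : ∑' m, d (m + 1) * z ^ (m + 1) = 2 * Real.sqrt 2 - 2 * Real.sqrt (2 - z) := by
      rw [← hdval, hdz, hd0]
      ring
    have h' : A - z * A = (2 * Real.sqrt 2 - 2) - (2 * Real.sqrt 2 - 2 * Real.sqrt (2 - z)) := by
      rw [hdiff, this, hq0, hd0]
      ring
    linear_combination h'
  have hz1 : 1 - z ≠ 0 := by linarith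
  rw [hA, eq_div_iff hz1] at *
  linear_combination hmain

lemma pgf_le_one {z : ℝ} (h0 : 0 ≤ z) (h1 : z < 1) :
    (2 * Real.sqrt (2 - z) - 2) / (1 - z) ≤ 1 := by
  rw [div_le_one (by linarith)]
  have hs := Real.sq_sqrt (show (0:ℝ) ≤ 2 - z by linarith)
  have hs0 := Real.sqrt_nonneg (2 - z)
  nlinarith [sq_nonneg (Real.sqrt (2 - z) - 1)]

lemma pgf_alt {z : ℝ} (h0 : 0 ≤ z) (h1 : z < 1) :
    (2 * Real.sqrt (2 - z) - 2) / (1 - z) = 2 / (1 + Real.sqrt (2 - z)) := by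
  have hs := Real.sq_sqrt (show (0:ℝ) ≤ 2 - z by linarith)
  have hs0 := Real.sqrt_nonneg (2 - z)
  have h1z : (1:ℝ) - z ≠ 0 := by linarith
  have hden : (1:ℝ) + Real.sqrt (2 - z) ≠ 0 := by positivity
  field_simp
  nlinarith [hs]

lemma tendsto_g : Filter.Tendsto (fun z : ℝ => 2 / (1 + Real.sqrt (2 - z)))
    (nhdsWithin 1 (Set.Iio 1)) (nhds 1) := by
  have hc : ContinuousAt (fun z : ℝ => 2 / (1 + Real.sqrt (2 - z))) 1 := by
    apply ContinuousAt.div continuousAt_const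
    · exact (continuousAt_const.add ((Real.continuous_sqrt.comp
        (continuous_const.sub continuous_id)).continuousAt))
    · simp [Real.sqrt_one]
      positivity
  have hval : (fun z : ℝ => 2 / (1 + Real.sqrt (2 - z))) 1 = 1 := by
    norm_num
  have h2 : Real.sqrt ((2:ℝ) - 1) = 1 := by norm_num
  have h : Filter.Tendsto (fun z : ℝ => 2 / (1 + Real.sqrt (2 - z)))
      (nhdsWithin 1 (Set.Iio 1)) (nhds (2 / (1 + Real.sqrt (2 - 1)))) :=
    hc.continuousWithinAt
  rw [h2] at h
  norm_num at h
  exact h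

end ChebyshevThinningAux

open ChebyshevThinningAux

/-- The Chebyshev-type thinning function `Q_{1/2}(z) = (2√(2-z) - 2)/(1-z)`
is a probability generating function of a distribution on `ℕ`. -/
theorem chebyshev_thinning_half_is_pgf :
    ∃ q : ℕ → ℝ, (∀ n, 0 ≤ q n) ∧ HasSum q 1 ∧
      ∀ z ∈ Set.Ico (0 : ℝ) 1,
        ∑' m : ℕ, q m * z ^ m = (2 * Real.sqrt (2 - z) - 2) / (1 - z) := by
  refine ⟨q, q_nonneg, ?_, fun z hz => pgf_eq hz.1 hz.2⟩
  -- partial sums are bounded by 1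
  have hbound : ∀ N, ∑ m ∈ range N, q m ≤ 1 := by
    intro N
    have hple : ∀ z : ℝ, 0 ≤ z → z < 1 → ∑ m ∈ range N, q m * z ^ m ≤ 1 := by
      intro z h0 h1
      have h1' : ∑ m ∈ range N, q m * z ^ m ≤ ∑' m, q m * z ^ m :=
        Summable.sum_le_tsum (range N)
          (fun m _ => mul_nonneg (q_nonneg m) (pow_nonneg h0 m))
          (summable_q_geom h0 h1)
      rw [pgf_eq h0 h1] at h1'
      exact h1'.trans (pgf_le_one h0 h1)
    -- take the limit z → 1⁻
    have hcont : Filter.Tendsto (fun z : ℝ => ∑ m ∈ range N, q m * z ^ m)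
        (nhdsWithin 1 (Set.Iio 1)) (nhds (∑ m ∈ range N, q m * (1:ℝ) ^ m)) := by
      apply Filter.Tendsto.mono_left _ nhdsWithin_le_nhds
      exact (Continuous.tendsto (by continuity) 1)
    have hev : ∀ᶠ z in nhdsWithin (1:ℝ) (Set.Iio 1),
        ∑ m ∈ range N, q m * z ^ m ≤ 1 := by
      have hpos : ∀ᶠ z in nhdsWithin (1:ℝ) (Set.Iio 1), (0:ℝ) < z := by
        apply eventually_nhdsWithin_of_eventually_nhds
        exact eventually_gt_nhds (by norm_num)
      filter_upwards [hpos, self_mem_nhdsWithin] with z hz1 hz2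
      exact hple z hz1.le hz2
    have := le_of_tendsto hcont hev
    simpa using this
  have hsummable : Summable q := summable_of_sum_range_le q_nonneg hbound
  have hSle : ∑' m, q m ≤ 1 := Real.tsum_le_of_sum_range_le q_nonneg hbound
  -- lower bound : 1 ≤ ∑' q
  have hSge : 1 ≤ ∑' m, q m := by
    have hle : ∀ z : ℝ, 0 ≤ z → z < 1 → 2 / (1 + Real.sqrt (2 - z)) ≤ ∑' m, q m := by
      intro z h0 h1
      rw [← pgf_alt h0 h1, ← pgf_eq h0 h1]
      apply Summable.tsum_le_tsum _ (summable_q_geom h0 h1) hsummable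
      intro m
      calc q m * z ^ m ≤ q m * 1 := by
            apply mul_le_mul_of_nonneg_left _ (q_nonneg m)
            exact pow_le_one₀ h0 h1.le
        _ = q m := mul_one _
    have hev : ∀ᶠ z in nhdsWithin (1:ℝ) (Set.Iio 1),
        2 / (1 + Real.sqrt (2 - z)) ≤ ∑' m, q m := by
      have hpos : ∀ᶠ z in nhdsWithin (1:ℝ) (Set.Iio 1), (0:ℝ) < z := by
        apply eventually_nhdsWithin_of_eventually_nhds
        exact eventually_gt_nhds (by norm_num)
      filter_upwards [hpos, self_mem_nhdsWithin] with z hz1 hz2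
      exact hle z hz1.le hz2
    exact le_of_tendsto tendsto_g hev
  have : ∑' m, q m = 1 := le_antisymm hSle hSge
  rw [← this]
  exact hsummable.hasSum
end

section
/- Let γ ∈ (0,1], λ > 0, κ ∈ [0,1), m a positive integer, and n a positive integer; set p = n^{−1/γ}, and if m > 1 assume additionally that p < κ. Define Q(z) = (((1−p)+(p−κ)z^m)/((1−pκ)−κ(1−p)z^m))^{1/m} and P(z) = exp(−λ·((1−z^m)/(1−κz^m))^γ) for z ∈ [0,1]. Then for every z ∈ [0,1], P(Q(z))ⁿ = P(z). -/
/-- Stability of the positive discrete stable distribution `PDS^m(γ,λ,κ)`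
under the modified geometric thinning operator `𝒢(p,κ,m)` with
`p = n^{-1/γ}` : `P(Q(z))ⁿ = P(z)`. -/
theorem pds_stability_geometric_thinning (γ lam κ : ℝ) (m n : ℕ)
    (hγ : γ ∈ Set.Ioc (0 : ℝ) 1) (hlam : 0 < lam) (hκ : κ ∈ Set.Ico (0 : ℝ) 1)
    (hm : 0 < m) (hn : 0 < n)
    (p : ℝ) (hp : p = (n : ℝ) ^ (-(1 / γ))) (hpκ : 1 < m → p < κ) :
    ∀ z ∈ Set.Icc (0 : ℝ) 1,
      (Real.exp (-lam *
          ((1 - ((((1 - p) + (p - κ) * z ^ m) / ((1 - p * κ) - κ * (1 - p) * z ^ m))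
              ^ ((1 : ℝ) / m)) ^ m) /
           (1 - κ * ((((1 - p) + (p - κ) * z ^ m) / ((1 - p * κ) - κ * (1 - p) * z ^ m))
              ^ ((1 : ℝ) / m)) ^ m)) ^ γ)) ^ n
        = Real.exp (-lam * ((1 - z ^ m) / (1 - κ * z ^ m)) ^ γ) := by
  obtain ⟨hγ0, hγ1⟩ := hγ
  obtain ⟨hκ0, hκ1⟩ := hκ
  intro z hz
  obtain ⟨hz0, hz1⟩ := hz
  have hn0 : (0 : ℝ) < n := by exact_mod_cast hn
  have hp0 : 0 < p := by rw [hp]; positivity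
  have hp1 : p ≤ 1 := by
    rw [hp]
    apply Real.rpow_le_one_of_one_le_of_nonpos
    · exact_mod_cast hn
    · simp [hγ0.le]
  set w := z ^ m with hw
  have hw0 : 0 ≤ w := pow_nonneg hz0 m
  have hw1 : w ≤ 1 := pow_le_one₀ hz0 hz1
  have hκw : κ * w < 1 := by nlinarith
  set A := (1 - p) + (p - κ) * w with hA_def
  set B := (1 - p * κ) - κ * (1 - p) * w with hB_def
  have hB : 0 < B := by
    rcases le_or_gt κ p with h | h
    · nlinarith
    · nlinarith
  have hA : 0 ≤ A := by
    rcases le_or_gt κ p with h | h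
    · nlinarith
    · nlinarith
  have hQ : ((A / B) ^ ((1 : ℝ) / m)) ^ m = A / B := by
    rw [one_div]
    exact Real.rpow_inv_natCast_pow (div_nonneg hA hB.le) hm.ne'
  rw [hQ]
  have hκw' : (0:ℝ) < 1 - κ * w := by linarith
  have hratio : (1 - A / B) / (1 - κ * (A / B)) = p * ((1 - w) / (1 - κ * w)) := by
    have h1 : 1 - A / B = (p * (1 - κ) * (1 - w)) / B := by
      rw [eq_div_iff hB.ne']; field_simp; ring
    have h2 : 1 - κ * (A / B) = ((1 - κ) * (1 - κ * w)) / B := by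
      rw [eq_div_iff hB.ne']; field_simp; ring
    have h1κ : (1 : ℝ) - κ ≠ 0 := by linarith
    rw [h1, h2]
    field_simp
  rw [hratio]
  have hX : 0 ≤ (1 - w) / (1 - κ * w) := div_nonneg (by linarith) hκw'.le
  rw [Real.mul_rpow hp0.le hX]
  have hpγ : p ^ γ = (n : ℝ)⁻¹ := by
    rw [hp, ← Real.rpow_mul hn0.le, show -(1 / γ) * γ = -1 by field_simp,
      Real.rpow_neg_one]
  rw [hpγ, ← Real.exp_nat_mul]
  congr 1
  field_simp
end

section
/- Let p ∈ (0,1), γ > 0, λ > 0, and define Q(z) = pz/(1 − (1−p)z) for z ∈ (0,1] and P(z) = exp(−λ·(1/z − 1)^γ) for z ∈ (0,1]. Then for every z ∈ (0,1], Q(z) ∈ (0,1] and P(Q(z)) = P(z)^{p^{−γ}}. In particular, if n = p^{−γ} is a positive integer, then P(Q(z)) = P(z)ⁿ. -/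
/-- Discrete stability in the second sense with geometric portlying operator:
with `Q(z) = pz/(1-(1-p)z)` and `P(z) = exp(-λ(1/z - 1)^γ)` one has
`Q(z) ∈ (0,1]` and `P(Q(z)) = P(z)^(p^{-γ})`; in particular `P(Q(z)) = P(z)ⁿ`
whenever `n = p^{-γ}` is a positive integer. -/
theorem geometric_portlying_stability (p γ lam : ℝ)
    (hp : p ∈ Set.Ioo (0 : ℝ) 1) (hγ : 0 < γ) (hlam : 0 < lam)
    (z : ℝ) (hz : z ∈ Set.Ioc (0 : ℝ) 1) :
    p * z / (1 - (1 - p) * z) ∈ Set.Ioc (0 : ℝ) 1 ∧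
    Real.exp (-lam * (1 / (p * z / (1 - (1 - p) * z)) - 1) ^ γ)
      = (Real.exp (-lam * (1 / z - 1) ^ γ)) ^ (p ^ (-γ)) ∧
    ∀ n : ℕ, (n : ℝ) = p ^ (-γ) →
      Real.exp (-lam * (1 / (p * z / (1 - (1 - p) * z)) - 1) ^ γ)
        = (Real.exp (-lam * (1 / z - 1) ^ γ)) ^ n := by
  obtain ⟨hp0, hp1⟩ := hp
  obtain ⟨hz0, hz1⟩ := hz
  have hD : 0 < 1 - (1 - p) * z := by nlinarith
  have hpz : 0 < p * z := mul_pos hp0 hz0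
  have hQ : p * z / (1 - (1 - p) * z) ∈ Set.Ioc (0 : ℝ) 1 := by
    constructor
    · exact div_pos hpz hD
    · rw [div_le_one hD]; nlinarith
  have hkey : 1 / (p * z / (1 - (1 - p) * z)) - 1 = p ⁻¹ * (1 / z - 1) := by
    field_simp
    ring
  have hx : (0 : ℝ) ≤ 1 / z - 1 := by
    have : (1 : ℝ) ≤ 1 / z := one_le_one_div hz0 hz1
    linarith
  have hmain : Real.exp (-lam * (1 / (p * z / (1 - (1 - p) * z)) - 1) ^ γ)
      = (Real.exp (-lam * (1 / z - 1) ^ γ)) ^ (p ^ (-γ)) := by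
    rw [hkey, Real.mul_rpow (by positivity) hx, Real.inv_rpow hp0.le,
      ← Real.rpow_neg hp0.le, ← Real.exp_mul]
    ring_nf
  refine ⟨hQ, hmain, ?_⟩
  intro n hn
  rw [hmain, ← hn, Real.rpow_natCast]
end

section
/- Let n be a positive integer, let T_n denote the n-th Chebyshev polynomial of the first kind, and define P(z) = (1 − √(1−z²))/z for z ∈ (0,1]. Then for every z ∈ (0,1) one has T_n(1/z) ≥ 1, the value Q(z) = 1/T_n(1/z) lies in (0,1], and P(Q(z)) = P(z)ⁿ. -/
/-!
Substitute `1 / z = cosh t` with `t ≥ 0`. Then `Tₙ(1/z) = cosh (n t)`, and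
`P (1 / cosh s) = cosh s - sinh s = e^{-s}` for `s ≥ 0`, so both sides of `P(Q(z)) = P(z)ⁿ`
equal `e^{-n t}`.
-/

open Real Polynomial Chebyshev

noncomputable def stablePGF (z : ℝ) : ℝ := (1 - √(1 - z ^ 2)) / z

lemma stablePGF_one_div_cosh {t : ℝ} (ht : 0 ≤ t) : stablePGF (1 / cosh t) = exp (-t) := by
  have hcosh : 0 < cosh t := cosh_pos t
  have hsq : 1 - (1 / cosh t) ^ 2 = (sinh t / cosh t) ^ 2 := by
    field_simp
    linarith [cosh_sq_sub_sinh_sq t]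
  rw [stablePGF, hsq, sqrt_sq (div_nonneg (sinh_nonneg_iff.mpr ht) hcosh.le), ← cosh_sub_sinh]
  field_simp

theorem chebyshev_portlying_stability_general (n : ℕ)
    (z : ℝ) (hz : z ∈ Set.Ioo (0 : ℝ) 1) :
    1 ≤ (Polynomial.Chebyshev.T ℝ (n : ℤ)).eval (1 / z) ∧
    1 / (Polynomial.Chebyshev.T ℝ (n : ℤ)).eval (1 / z) ∈ Set.Ioc (0 : ℝ) 1 ∧
    (1 - Real.sqrt (1 - (1 / (Polynomial.Chebyshev.T ℝ (n : ℤ)).eval (1 / z)) ^ 2)) /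
        (1 / (Polynomial.Chebyshev.T ℝ (n : ℤ)).eval (1 / z))
      = ((1 - Real.sqrt (1 - z ^ 2)) / z) ^ n := by
  obtain ⟨hz0, hz1⟩ := hz
  have hx : 1 ≤ 1 / z := one_le_one_div hz0 hz1.le
  have hT : 1 ≤ (T ℝ n).eval (1 / z) := one_le_eval_T_real n hx
  refine ⟨hT, ⟨by positivity, div_le_one_of_le₀ hT (by positivity)⟩, ?_⟩
  have ht : 0 ≤ arcosh (1 / z) := arcosh_nonneg hx
  change stablePGF (1 / (T ℝ n).eval (1 / z)) = stablePGF z ^ n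
  calc stablePGF (1 / (T ℝ n).eval (1 / z))
      = stablePGF (1 / cosh ((n : ℤ) * arcosh (1 / z))) := by
        rw [← T_real_cosh, cosh_arcosh hx]
    _ = exp (-arcosh (1 / z)) ^ n := by
        rw [stablePGF_one_div_cosh (by positivity), ← exp_nat_mul, mul_neg, Int.cast_natCast]
    _ = stablePGF z ^ n := by
        rw [← stablePGF_one_div_cosh ht, cosh_arcosh hx, one_div_one_div]

open Polynomial Chebyshev in
/-- Discrete stability in the second sense with Chebyshev portlying operator:
for `P(z) = (1-√(1-z²))/z` and `Q(z) = 1/Tₙ(1/z)` one has `Tₙ(1/z) ≥ 1`,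
`Q(z) ∈ (0,1]` and `P(Q(z)) = P(z)ⁿ`. -/
theorem chebyshev_portlying_stability (n : ℕ) (hn : 0 < n)
    (z : ℝ) (hz : z ∈ Set.Ioo (0 : ℝ) 1) :
    1 ≤ (Polynomial.Chebyshev.T ℝ (n : ℤ)).eval (1 / z) ∧
    1 / (Polynomial.Chebyshev.T ℝ (n : ℤ)).eval (1 / z) ∈ Set.Ioc (0 : ℝ) 1 ∧
    (1 - Real.sqrt (1 - (1 / (Polynomial.Chebyshev.T ℝ (n : ℤ)).eval (1 / z)) ^ 2)) /
        (1 / (Polynomial.Chebyshev.T ℝ (n : ℤ)).eval (1 / z))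
      = ((1 - Real.sqrt (1 - z ^ 2)) / z) ^ n :=
  chebyshev_portlying_stability_general n z hz
end

section
/- For t ∈ ℝ define the complex number f(t) = (1 − √(1 − e^{2it}))/e^{it}, where √ denotes the principal branch of the complex square root. Then for every t ∈ ℝ, lim_{n→∞} f(t/n²)ⁿ = exp(−|t|^{1/2}·(1 − i·sgn(t))). Equivalently, the limit equals exp(−√2·(−it)^{1/2}) with the principal branch power, which is the characteristic function of the Lévy distribution (the stable law S(1/2, 1, 1, 0)). -/
/-!
With `s = t/n²` we have `n²(e^{2is} - 1) → 2it`, so `n√(1 - e^{2is}) = √(n²(1 - e^{2is})) → √(-2it)`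
(the square root is continuous on the imaginary axis), while `n(1 - e^{is}) → 0`. Hence
`n(f(t/n²) - 1) → -√(-2it)`, and `(1 + w/n + o(1/n))ⁿ → eʷ`. The limit is put in closed form using
`√2·√(∓i) = 1 ∓ i`.
-/

open Complex Filter Topology

namespace Complex

theorem ofReal_mul_cpow {r : ℝ} (hr : 0 < r) (z s : ℂ) :
    ((r : ℂ) * z) ^ s = (r : ℂ) ^ s * z ^ s := by
  have hr' : (r : ℂ) ≠ 0 := ofReal_ne_zero.2 hr.ne'
  rcases eq_or_ne z 0 with rfl | hz
  · rcases eq_or_ne s 0 with rfl | hs <;> simp [zero_cpow, *]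
  · rw [cpow_def_of_ne_zero (mul_ne_zero hr' hz), cpow_def_of_ne_zero hr',
      cpow_def_of_ne_zero hz, log_ofReal_mul hr hz, add_mul, exp_add, ofReal_log hr.le]

theorem sqrt_ofReal_mul {r : ℝ} (hr : 0 ≤ r) (z : ℂ) : sqrt (r * z) = √r * sqrt z := by
  rcases hr.eq_or_lt with rfl | hr
  · simp
  · rw [sqrt, ofReal_mul_cpow hr, Real.sqrt_eq_rpow, ofReal_cpow hr.le]
    norm_num [sqrt]

theorem sqrt_two_mul_sqrt_neg_I_mul (t : ℝ) :
    (√2 : ℂ) * sqrt (-(I * t)) = √|t| * (1 - I * Real.sign t) := by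
  have h2 : (√2 : ℂ) * (√2 : ℂ)⁻¹ = 1 := mul_inv_cancel₀ (by simp)
  rcases lt_trichotomy t 0 with ht | rfl | ht
  · have : -(I * t) = (|t| : ℝ) * I := by rw [abs_of_neg ht]; push_cast; ring
    rw [this, sqrt_ofReal_mul (abs_nonneg t), sqrt_I, Real.sqrt_inv, Real.sign_of_neg ht]
    push_cast
    linear_combination (√|t| : ℂ) * (1 + I) * h2
  · simp
  · have : -(I * t) = (|t| : ℝ) * -I := by rw [abs_of_pos ht]; ring
    rw [this, sqrt_ofReal_mul (abs_nonneg t), sqrt_neg_I, Real.sqrt_inv, Real.sign_of_pos ht]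
    push_cast
    linear_combination (√|t| : ℂ) * (1 - I) * h2

theorem tendsto_inv_natCast_sq_nhdsNE_zero :
    Tendsto (fun n : ℕ => ((n : ℂ) ^ 2)⁻¹) atTop (𝓝[≠] 0) := by
  refine tendsto_nhdsWithin_iff.2 ⟨?_, ?_⟩
  · simpa [Function.comp_def] using (tendsto_inv_atTop_nhds_zero_nat (𝕜 := ℂ)).comp
      (tendsto_pow_atTop two_ne_zero)
  · filter_upwards [eventually_ne_atTop 0] with n hn
    simpa using hn

theorem tendsto_sq_mul_exp_div_sq_sub_one (c : ℂ) :
    Tendsto (fun n : ℕ => (n : ℂ) ^ 2 * (exp (c / (n : ℂ) ^ 2) - 1)) atTop (𝓝 c) := by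
  have hderiv : HasDerivAt (fun s : ℂ => exp (c * s)) c 0 := by
    simpa using ((hasDerivAt_id (0 : ℂ)).const_mul c).cexp
  refine ((hasDerivAt_iff_tendsto_slope_zero.mp hderiv).comp
    tendsto_inv_natCast_sq_nhdsNE_zero).congr fun n => ?_
  simp [div_eq_mul_inv]

end Complex

/-- `P(e^{is})` for the generating function `P(z) = (1 - √(1 - z²))/z`. -/
noncomputable def discreteStableCharFun (s : ℝ) : ℂ :=
  (1 - sqrt (1 - exp (2 * I * s))) / exp (I * s)

theorem tendsto_natCast_mul_discreteStableCharFun_sub_one (t : ℝ) :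
    Tendsto (fun n : ℕ => (n : ℂ) * (discreteStableCharFun (t / n ^ 2) - 1)) atTop
      (𝓝 (-sqrt (-(2 * I * t)))) := by
  have hsqrt : Tendsto (fun n : ℕ => (n : ℂ) * sqrt (1 - exp (2 * I * t / (n : ℂ) ^ 2))) atTop
      (𝓝 (sqrt (-(2 * I * t)))) := by
    refine ((continuousAt_sqrt (by simp)).tendsto.comp
      (tendsto_sq_mul_exp_div_sq_sub_one (2 * I * t)).neg).congr fun n => ?_
    rw [Function.comp_apply, ← mul_neg, neg_sub,
      show (n : ℂ) ^ 2 = ((n ^ 2 : ℝ) : ℂ) by push_cast; rfl,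
      sqrt_ofReal_mul (by positivity), Real.sqrt_sq n.cast_nonneg, ofReal_natCast]
  have hlin : Tendsto (fun n : ℕ => (n : ℂ) * (exp (I * t / (n : ℂ) ^ 2) - 1)) atTop (𝓝 0) := by
    have := (tendsto_sq_mul_exp_div_sq_sub_one (I * t)).mul
      (tendsto_inv_atTop_nhds_zero_nat (𝕜 := ℂ))
    rw [mul_zero] at this
    refine this.congr' ?_
    filter_upwards [eventually_ne_atTop 0] with n hn
    field_simp
  have hexp : Tendsto (fun n : ℕ => exp (I * t / (n : ℂ) ^ 2)) atTop (𝓝 1) := by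
    have h0 := (tendsto_const_nhds (x := I * t)).mul
      (tendsto_nhdsWithin_iff.1 tendsto_inv_natCast_sq_nhdsNE_zero).1
    rw [mul_zero] at h0
    simpa [div_eq_mul_inv, Function.comp_def] using (continuous_exp.tendsto 0).comp h0
  have h := (hlin.neg.sub hsqrt).div hexp one_ne_zero
  rw [neg_zero, zero_sub, div_one] at h
  refine h.congr fun n => ?_
  simp only [discreteStableCharFun, Pi.div_apply]
  push_cast
  field_simp
  ring

open Complex Filter in
/-- The discrete stable distribution in the second sense with characteristic
function `f(t) = (1 - √(1 - e^{2it}))/e^{it}` belongs to the domain of normal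
attraction of the Lévy distribution `S(1/2,1,1,0)`:
`f(t/n²)ⁿ → exp(-|t|^{1/2}(1 - i sgn t))`, and this limit equals
`exp(-√2 (-it)^{1/2})` (principal branch powers). -/
theorem levy_domain_of_attraction (t : ℝ) :
    Filter.Tendsto
      (fun n : ℕ =>
        ((1 - (1 - Complex.exp (2 * Complex.I * ((t / (n : ℝ) ^ 2 : ℝ) : ℂ))) ^ ((1 : ℂ) / 2)) /
            Complex.exp (Complex.I * ((t / (n : ℝ) ^ 2 : ℝ) : ℂ))) ^ n)
      Filter.atTop
      (nhds (Complex.exp (-((|t| ^ ((1 : ℝ) / 2) : ℝ) : ℂ) * (1 - Complex.I * (Real.sign t : ℝ))))) ∧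
    Complex.exp (-((Real.sqrt 2 : ℝ) : ℂ) * (-(Complex.I * (t : ℂ))) ^ ((1 : ℂ) / 2))
      = Complex.exp (-((|t| ^ ((1 : ℝ) / 2) : ℝ) : ℂ) * (1 - Complex.I * (Real.sign t : ℝ))) := by
  have hlevy : -(√2 : ℂ) * sqrt (-(I * t)) =
      -((|t| ^ ((1 : ℝ) / 2) : ℝ) : ℂ) * (1 - I * Real.sign t) := by
    rw [neg_mul, sqrt_two_mul_sqrt_neg_I_mul, ← Real.sqrt_eq_rpow, neg_mul]
  have hscale : -sqrt (-(2 * I * t)) = -(√2 : ℂ) * sqrt (-(I * t)) := by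
    rw [show -(2 * I * t) = ((2 : ℝ) : ℂ) * -(I * t) by push_cast; ring,
      sqrt_ofReal_mul zero_le_two, neg_mul]
  rw [one_div (2 : ℂ)]
  refine ⟨?_, congrArg exp hlevy⟩
  rw [← hlevy, ← hscale]
  refine (tendsto_one_add_pow_exp_of_tendsto
    (tendsto_natCast_mul_discreteStableCharFun_sub_one t)).congr fun n => ?_
  rw [add_sub_cancel]
  rfl
end

section
/- Let γ ∈ (0,1) and let (μ_k)_{k≥1} be a probability distribution on the positive integers with μ₁ < 1. Let P : [0,1] → ℝ be the probability generating function of a probability distribution on ℕ, assume P(z) > 0 for all z ∈ [0,1], assume that the function z ↦ log P(z)/(1−z)^γ extends continuously to the closed interval [0,1], and assume that for every z ∈ [0,1], P(z) = ∑_{k=1}^∞ μ_k · P(1 − k^{−1/γ}(1−z))^k. Then there exists λ ≥ 0 such that P(z) = exp(−λ(1−z)^γ) for all z ∈ [0,1]. -/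
/-- Characterization of the positive discrete stable law `PDS(γ,λ)`: if the
PGF `P` of a distribution on `ℕ` satisfies the random-sum identity
`P(z) = ∑ₖ μₖ P(1 - k^{-1/γ}(1-z))ᵏ` for a distribution `(μₖ)` on the
positive integers with `μ₁ < 1`, and `log P(z)/(1-z)^γ` extends continuously
to `[0,1]`, then `P(z) = exp(-λ(1-z)^γ)` for some `λ ≥ 0`. -/
theorem pds_characterization (γ : ℝ) (hγ : γ ∈ Set.Ioo (0 : ℝ) 1)
    (μ : ℕ → ℝ) (hμ0 : ∀ k, 0 ≤ μ k)
    (hμsum : HasSum (fun k : ℕ => μ (k + 1)) 1) (hμ1 : μ 1 < 1)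
    (p : ℕ → ℝ) (hp0 : ∀ n, 0 ≤ p n) (hpsum : HasSum p 1)
    (P : ℝ → ℝ) (hP : ∀ z ∈ Set.Icc (0 : ℝ) 1, P z = ∑' n : ℕ, p n * z ^ n)
    (hPpos : ∀ z ∈ Set.Icc (0 : ℝ) 1, 0 < P z)
    (hext : ∃ g : ℝ → ℝ, ContinuousOn g (Set.Icc (0 : ℝ) 1) ∧
      ∀ z ∈ Set.Ico (0 : ℝ) 1, g z = Real.log (P z) / (1 - z) ^ γ)
    (heq : ∀ z ∈ Set.Icc (0 : ℝ) 1,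
      P z = ∑' k : ℕ,
        μ (k + 1) * (P (1 - ((k + 1 : ℕ) : ℝ) ^ (-(1 / γ)) * (1 - z))) ^ (k + 1)) :
    ∃ lam : ℝ, 0 ≤ lam ∧
      ∀ z ∈ Set.Icc (0 : ℝ) 1, P z = Real.exp (-lam * (1 - z) ^ γ) := by
  obtain ⟨hγ0, hγ1⟩ := hγ
  obtain ⟨g, hgc, hgeq⟩ := hext
  have hγ0' : γ ≠ 0 := ne_of_gt hγ0
  set c : ℕ → ℝ := fun k => ((k + 1 : ℕ) : ℝ) ^ (-(1 / γ)) with hc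
  have hbase : ∀ k : ℕ, (1 : ℝ) ≤ ((k + 1 : ℕ) : ℝ) := by
    intro k; exact_mod_cast Nat.one_le_iff_ne_zero.mpr (Nat.succ_ne_zero k)
  have hcpos : ∀ k, 0 < c k := fun k =>
    Real.rpow_pos_of_pos (lt_of_lt_of_le one_pos (hbase k)) _
  have hcle : ∀ k, c k ≤ 1 := by
    intro k
    have h1 : c k ≤ ((k + 1 : ℕ) : ℝ) ^ (0 : ℝ) :=
      Real.rpow_le_rpow_of_exponent_le (hbase k) (by rw [neg_nonpos]; positivity)
    simpa using h1
  have hclt : ∀ k, 1 ≤ k → c k < 1 := by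
    intro k hk
    apply Real.rpow_lt_one_of_one_lt_of_neg
    · exact_mod_cast Nat.lt_of_lt_of_le Nat.one_lt_two (by omega)
    · have : 0 < 1 / γ := by positivity
      linarith
  set T : ℕ → ℝ → ℝ := fun k z => 1 - c k * (1 - z) with hT
  have hTIcc : ∀ k, ∀ z ∈ Set.Icc (0 : ℝ) 1, T k z ∈ Set.Icc (0 : ℝ) 1 := by
    intro k z hz
    have h1 : 0 ≤ c k * (1 - z) := mul_nonneg (hcpos k).le (by linarith [hz.2])
    have h2 : c k * (1 - z) ≤ 1 * 1 := by
      apply mul_le_mul (hcle k) (by linarith [hz.1]) (by linarith [hz.2]) zero_le_one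
    constructor <;> simp only [hT] <;> linarith
  have hTIco : ∀ k, ∀ z ∈ Set.Ico (0 : ℝ) 1, T k z ∈ Set.Ico (0 : ℝ) 1 := by
    intro k z hz
    have h1 : 0 < c k * (1 - z) := mul_pos (hcpos k) (by linarith [hz.2])
    have h2 := (hTIcc k z ⟨hz.1, hz.2.le⟩).1
    exact ⟨h2, by simp only [hT]; linarith⟩
  -- scaling identity
  have hsc : ∀ k, ∀ z ∈ Set.Ico (0 : ℝ) 1,
      (1 - T k z) ^ γ = (1 - z) ^ γ / ((k + 1 : ℕ) : ℝ) := by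
    intro k z hz
    have h1z : (0 : ℝ) ≤ 1 - z := by linarith [hz.2.le]
    have e1 : 1 - T k z = c k * (1 - z) := by simp only [hT]; ring
    rw [e1, Real.mul_rpow (hcpos k).le h1z]
    have e2 : (c k) ^ γ = ((k + 1 : ℕ) : ℝ) ^ (-(1 / γ) * γ) := by
      rw [hc, ← Real.rpow_mul (by positivity)]
    have e3 : -(1 / γ) * γ = -1 := by field_simp
    rw [e2, e3, Real.rpow_neg_one]
    ring
  -- basic facts about P
  have hP1 : P 1 = 1 := by
    rw [hP 1 (by norm_num)]; simpa using hpsum.tsum_eq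
  have hPle : ∀ z ∈ Set.Icc (0 : ℝ) 1, P z ≤ 1 := by
    intro z hz
    rw [hP z hz]
    have hb : ∀ n, p n * z ^ n ≤ p n := fun n =>
      mul_le_of_le_one_right (hp0 n) (pow_le_one₀ hz.1 hz.2)
    have hs : Summable fun n => p n * z ^ n :=
      Summable.of_nonneg_of_le (fun n => mul_nonneg (hp0 n) (pow_nonneg hz.1 n)) hb
        hpsum.summable
    calc (∑' n, p n * z ^ n) ≤ ∑' n, p n := Summable.tsum_le_tsum hb hs hpsum.summable
      _ = 1 := hpsum.tsum_eq
  -- exponential formula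
  have hPexp : ∀ z ∈ Set.Ico (0 : ℝ) 1, P z = Real.exp (g z * (1 - z) ^ γ) := by
    intro z hz
    have hu : 0 < (1 - z) ^ γ := Real.rpow_pos_of_pos (by linarith [hz.2]) γ
    rw [hgeq z hz, div_mul_cancel₀ _ (ne_of_gt hu),
      Real.exp_log (hPpos z ⟨hz.1, hz.2.le⟩)]
  have hpow : ∀ k, ∀ z ∈ Set.Ico (0 : ℝ) 1,
      (P (T k z)) ^ (k + 1) = Real.exp (g (T k z) * (1 - z) ^ γ) := by
    intro k z hz
    have hT' := hTIco k z hz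
    rw [hPexp _ hT', ← Real.exp_nat_mul]
    congr 1
    rw [hsc k z hz]
    have hk : ((k + 1 : ℕ) : ℝ) ≠ 0 := by positivity
    field_simp
  -- key functional equation in terms of g
  have keyeq : ∀ z ∈ Set.Ico (0 : ℝ) 1,
      Real.exp (g z * (1 - z) ^ γ)
        = ∑' k : ℕ, μ (k + 1) * Real.exp (g (T k z) * (1 - z) ^ γ) := by
    intro z hz
    rw [← hPexp z hz, heq z ⟨hz.1, hz.2.le⟩]
    exact tsum_congr fun k => by rw [← hpow k z hz]
  -- summability of the series
  have hSum : ∀ z ∈ Set.Ico (0 : ℝ) 1,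
      Summable fun k : ℕ => μ (k + 1) * Real.exp (g (T k z) * (1 - z) ^ γ) := by
    intro z hz
    apply Summable.of_nonneg_of_le (fun k => mul_nonneg (hμ0 _) (Real.exp_pos _).le) _ hμsum.summable
    intro k
    have hT' := hTIcc k z ⟨hz.1, hz.2.le⟩
    have h1 : Real.exp (g (T k z) * (1 - z) ^ γ) ≤ 1 := by
      rw [← hpow k z hz]
      exact pow_le_one₀ (hPpos _ hT').le (hPle _ hT')
    calc μ (k + 1) * Real.exp (g (T k z) * (1 - z) ^ γ) ≤ μ (k + 1) * 1 :=
          mul_le_mul_of_nonneg_left h1 (hμ0 _)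
      _ = μ (k + 1) := mul_one _
  -- choose an index j ≥ 1 with μ (j+1) > 0
  obtain ⟨j, hj1, hjpos⟩ : ∃ j, 1 ≤ j ∧ 0 < μ (j + 1) := by
    by_contra h
    push_neg at h
    have hz : ∀ k : ℕ, k ≠ 0 → μ (k + 1) = 0 := fun k hk =>
      le_antisymm (h k (Nat.one_le_iff_ne_zero.mpr hk)) (hμ0 _)
    have : (1 : ℝ) = μ 1 := by
      rw [← hμsum.tsum_eq, tsum_eq_single 0 (fun k hk => hz k hk)]
    linarith
  -- extremal points
  obtain ⟨zM, hzM, hMax⟩ := isCompact_Icc.exists_isMaxOn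
    (Set.nonempty_Icc.mpr zero_le_one) hgc
  obtain ⟨zm, hzm, hMin⟩ := isCompact_Icc.exists_isMinOn
    (Set.nonempty_Icc.mpr zero_le_one) hgc
  -- step lemmas: extrema propagate along T j
  have hstepM : ∀ z ∈ Set.Ico (0 : ℝ) 1, g z = g zM → g (T j z) = g zM := by
    intro z hz hgz
    by_contra hne
    have hu : 0 < (1 - z) ^ γ := Real.rpow_pos_of_pos (by linarith [hz.2]) γ
    have hlt : g (T j z) < g zM :=
      lt_of_le_of_ne (hMax (hTIcc j z ⟨hz.1, hz.2.le⟩)) hne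
    have hstrict : ∑' k : ℕ, μ (k + 1) * Real.exp (g (T k z) * (1 - z) ^ γ)
        < ∑' k : ℕ, μ (k + 1) * Real.exp (g zM * (1 - z) ^ γ) := by
      apply Summable.tsum_lt_tsum_of_nonneg (i := j) (fun k => mul_nonneg (hμ0 _) (Real.exp_pos _).le)
      · intro k
        apply mul_le_mul_of_nonneg_left _ (hμ0 _)
        exact Real.exp_le_exp.mpr
          (mul_le_mul_of_nonneg_right (hMax (hTIcc k z ⟨hz.1, hz.2.le⟩)) hu.le)
      · exact mul_lt_mul_of_pos_left
          (Real.exp_lt_exp.mpr (mul_lt_mul_of_pos_right hlt hu)) hjpos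
      · exact hμsum.summable.mul_right _
    rw [← keyeq z hz, hgz, tsum_mul_right, hμsum.tsum_eq, one_mul] at hstrict
    exact lt_irrefl _ hstrict
  have hstepm : ∀ z ∈ Set.Ico (0 : ℝ) 1, g z = g zm → g (T j z) = g zm := by
    intro z hz hgz
    by_contra hne
    have hu : 0 < (1 - z) ^ γ := Real.rpow_pos_of_pos (by linarith [hz.2]) γ
    have hlt : g zm < g (T j z) :=
      lt_of_le_of_ne (hMin (hTIcc j z ⟨hz.1, hz.2.le⟩)) (Ne.symm hne)
    have hstrict : ∑' k : ℕ, μ (k + 1) * Real.exp (g zm * (1 - z) ^ γ)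
        < ∑' k : ℕ, μ (k + 1) * Real.exp (g (T k z) * (1 - z) ^ γ) := by
      apply Summable.tsum_lt_tsum_of_nonneg (i := j) (fun k => mul_nonneg (hμ0 _) (Real.exp_pos _).le)
      · intro k
        apply mul_le_mul_of_nonneg_left _ (hμ0 _)
        exact Real.exp_le_exp.mpr
          (mul_le_mul_of_nonneg_right (hMin (hTIcc k z ⟨hz.1, hz.2.le⟩)) hu.le)
      · exact mul_lt_mul_of_pos_left
          (Real.exp_lt_exp.mpr (mul_lt_mul_of_pos_right hlt hu)) hjpos
      · exact hSum z hz
    rw [← keyeq z hz, hgz, tsum_mul_right, hμsum.tsum_eq, one_mul] at hstrict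
    exact lt_irrefl _ hstrict
  -- propagation to 1
  have hlim : ∀ z₀ ∈ Set.Icc (0 : ℝ) 1,
      (∀ z ∈ Set.Ico (0 : ℝ) 1, g z = g z₀ → g (T j z) = g z₀) → g 1 = g z₀ := by
    intro z₀ hz₀ hstep
    rcases eq_or_lt_of_le hz₀.2 with h1 | h1
    · rw [h1]
    set w : ℕ → ℝ := fun n => 1 - (c j) ^ n * (1 - z₀) with hw
    have hwmem : ∀ n, w n ∈ Set.Ico (0 : ℝ) 1 := by
      intro n
      have h1' : 0 < (c j) ^ n * (1 - z₀) :=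
        mul_pos (pow_pos (hcpos j) n) (by linarith)
      have h2 : (c j) ^ n * (1 - z₀) ≤ 1 * 1 :=
        mul_le_mul (pow_le_one₀ (hcpos j).le (hcle j)) (by linarith [hz₀.1])
          (by linarith) zero_le_one
      constructor <;> simp only [hw] <;> linarith
    have hgw : ∀ n, g (w n) = g z₀ := by
      intro n
      induction n with
      | zero => simp [hw]
      | succ n ih =>
        have : w (n + 1) = T j (w n) := by simp only [hw, hT]; ring
        rw [this]
        exact hstep (w n) (hwmem n) ih
    have hwt : Filter.Tendsto w Filter.atTop (nhds 1) := by
      have h0 : Filter.Tendsto (fun n => (c j) ^ n * (1 - z₀)) Filter.atTop (nhds 0) := by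
        simpa using
          (tendsto_pow_atTop_nhds_zero_of_lt_one (hcpos j).le (hclt j hj1)).mul_const (1 - z₀)
      simpa using (tendsto_const_nhds (x := (1 : ℝ))).sub h0
    have hwt' : Filter.Tendsto w Filter.atTop (nhdsWithin 1 (Set.Icc (0 : ℝ) 1)) :=
      tendsto_nhdsWithin_of_tendsto_nhds_of_eventually_within w hwt
        (Filter.Eventually.of_forall fun n => ⟨(hwmem n).1, (hwmem n).2.le⟩)
    have hcomp : Filter.Tendsto (fun n => g (w n)) Filter.atTop (nhds (g 1)) :=
      (hgc 1 (by norm_num)).tendsto.comp hwt'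
    have hconst : Filter.Tendsto (fun n => g (w n)) Filter.atTop (nhds (g z₀)) := by
      simp only [hgw]; exact tendsto_const_nhds
    exact tendsto_nhds_unique hcomp hconst
  have hM1 : g 1 = g zM := hlim zM hzM hstepM
  have hm1 : g 1 = g zm := hlim zm hzm hstepm
  have hgconst : ∀ z ∈ Set.Icc (0 : ℝ) 1, g z = g 1 := by
    intro z hz
    have h1 : g z ≤ g zM := hMax hz
    have h2 : g zm ≤ g z := hMin hz
    rw [hM1, hm1] at *
    linarith
  refine ⟨-g 1, ?_, ?_⟩
  · -- λ ≥ 0, i.e. g 1 ≤ 0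
    have h0 : g 0 ≤ 0 := by
      rw [hgeq 0 (by norm_num)]
      simp only [sub_zero, Real.one_rpow, div_one]
      exact Real.log_nonpos (hPpos 0 (by norm_num)).le (hPle 0 (by norm_num))
    have := hgconst 0 (by norm_num)
    linarith
  · intro z hz
    rcases eq_or_lt_of_le hz.2 with h1 | h1
    · rw [h1, hP1, sub_self, Real.zero_rpow hγ0', mul_zero, Real.exp_zero]
    · rw [hPexp z ⟨hz.1, h1⟩, hgconst z hz, neg_neg]
end

section
/- Let γ ∈ (0,1], λ > 0, and let μ be a probability measure on [0,∞) whose Laplace transform satisfies ∫₀^∞ e^{−u·s} dμ(s) = exp(−u^γ) for every real u ≥ 0. Then for every z ∈ [0,1], ∑_{k=0}^∞ z^k · (∫₀^∞ e^{−λ^{1/γ} s} (λ^{1/γ} s)^k / k! dμ(s)) = exp(−λ(1−z)^γ). In particular, the numbers p_k = ∫₀^∞ e^{−λ^{1/γ}s}(λ^{1/γ}s)^k/k! dμ(s) form a probability distribution on ℕ whose probability generating function is exp(−λ(1−z)^γ). -/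
/-!
Conditionally on `S = s`, a Poisson variable of mean `c s` has generating function
`exp (-(1 - z) c s)`. Integrating over `s` (the terms are nonnegative, so summation and
integration commute) turns the generating function of the mixture into the Laplace transform of
`μ` at `c (1 - z)`, which is `exp (-(c (1 - z)) ^ γ) = exp (-λ (1 - z) ^ γ)` for `c = λ ^ (1/γ)`.
-/

open MeasureTheory Real

theorem hasSum_pow_mul_poisson_weight (r z : ℝ) :
    HasSum (fun k : ℕ => z ^ k * (exp (-r) * r ^ k / k.factorial)) (exp (-((1 - z) * r))) := by
  have h := (NormedSpace.expSeries_div_hasSum_exp (z * r)).mul_left (exp (-r))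
  rw [← exp_eq_exp_ℝ, ← exp_add, show -r + z * r = -((1 - z) * r) by ring] at h
  exact h.congr_fun fun k => by rw [mul_pow]; ring

theorem hasSum_integral_of_nonneg {α : Type*} [MeasurableSpace α] {μ : Measure α}
    {F : ℕ → α → ℝ} {f : α → ℝ} (hF_meas : ∀ n, AEStronglyMeasurable (F n) μ)
    (hF_nonneg : ∀ n, ∀ᵐ a ∂μ, 0 ≤ F n a) (hf : Integrable f μ)
    (h_lim : ∀ᵐ a ∂μ, HasSum (fun n => F n a) (f a)) :
    HasSum (fun n => ∫ a, F n a ∂μ) (∫ a, f a ∂μ) := by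
  refine hasSum_integral_of_dominated_convergence F hF_meas (fun n => ?_)
    (h_lim.mono fun a ha => ha.summable) ?_ h_lim
  · filter_upwards [hF_nonneg n] with a ha
    rw [norm_of_nonneg ha]
  · exact hf.congr (h_lim.mono fun a ha => ha.tsum_eq.symm)

theorem integrable_exp_neg_mul {μ : Measure ℝ} [IsFiniteMeasure μ] (hμ : ∀ᵐ s ∂μ, 0 ≤ s)
    {a : ℝ} (ha : 0 ≤ a) : Integrable (fun s => exp (-a * s)) μ := by
  refine Integrable.of_bound (by fun_prop) 1 ?_
  filter_upwards [hμ] with s hs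
  rw [norm_of_nonneg (exp_pos _).le, exp_le_one_iff, neg_mul, neg_nonpos]
  exact mul_nonneg ha hs

theorem hasSum_pow_mul_integral_poisson_weight {μ : Measure ℝ} [IsFiniteMeasure μ]
    (hμ : ∀ᵐ s ∂μ, 0 ≤ s) {c z : ℝ} (hc : 0 ≤ c) (hz₀ : 0 ≤ z) (hz₁ : z ≤ 1) :
    HasSum (fun k : ℕ => z ^ k * ∫ s, exp (-c * s) * (c * s) ^ k / k.factorial ∂μ)
      (∫ s, exp (-(c * (1 - z)) * s) ∂μ) := by
  simp_rw [← integral_const_mul]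
  refine hasSum_integral_of_nonneg (fun k => by fun_prop) (fun k => ?_)
    (integrable_exp_neg_mul hμ (mul_nonneg hc (sub_nonneg.2 hz₁)))
    (ae_of_all _ fun s => ?_)
  · filter_upwards [hμ] with s hs
    have : 0 ≤ c * s := mul_nonneg hc hs
    positivity
  · convert hasSum_pow_mul_poisson_weight (c * s) z using 2 <;> ring_nf

open MeasureTheory in
/-- A Poisson distribution with random intensity `λ^{1/γ}·S_γ`, where `S_γ`
is positive `γ`-stable with Laplace transform `exp(-u^γ)`, is exactly the
positive discrete stable distribution `PDS(γ,λ)` with PGF `exp(-λ(1-z)^γ)`. -/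
theorem pds_poisson_mixture (γ lam : ℝ) (hγ : γ ∈ Set.Ioc (0 : ℝ) 1) (hlam : 0 < lam)
    (μ : Measure ℝ) [IsProbabilityMeasure μ]
    (hsupp : ∀ᵐ s ∂μ, 0 ≤ s)
    (hLap : ∀ u : ℝ, 0 ≤ u → ∫ s, Real.exp (-u * s) ∂μ = Real.exp (-(u ^ γ))) :
    (∀ z ∈ Set.Icc (0 : ℝ) 1,
      ∑' k : ℕ, z ^ k *
          (∫ s, Real.exp (-(lam ^ (1 / γ)) * s) * (lam ^ (1 / γ) * s) ^ k /
            (Nat.factorial k) ∂μ)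
        = Real.exp (-lam * (1 - z) ^ γ)) ∧
    (∀ k : ℕ, 0 ≤ ∫ s, Real.exp (-(lam ^ (1 / γ)) * s) * (lam ^ (1 / γ) * s) ^ k /
        (Nat.factorial k) ∂μ) ∧
    HasSum (fun k : ℕ => ∫ s, Real.exp (-(lam ^ (1 / γ)) * s) * (lam ^ (1 / γ) * s) ^ k /
        (Nat.factorial k) ∂μ) 1 := by
  obtain ⟨hγ₀, -⟩ := hγ
  set c := lam ^ (1 / γ)
  have hc : 0 ≤ c := rpow_nonneg hlam.le _
  have hcγ : c ^ γ = lam := by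
    rw [← rpow_mul hlam.le, one_div_mul_cancel hγ₀.ne', rpow_one]
  have pgf : ∀ z ∈ Set.Icc (0 : ℝ) 1, HasSum
      (fun k : ℕ => z ^ k * ∫ s, exp (-c * s) * (c * s) ^ k / k.factorial ∂μ)
      (exp (-lam * (1 - z) ^ γ)) := by
    rintro z ⟨hz₀, hz₁⟩
    convert hasSum_pow_mul_integral_poisson_weight hsupp hc hz₀ hz₁ using 1
    rw [hLap _ (mul_nonneg hc (sub_nonneg.2 hz₁)), mul_rpow hc (sub_nonneg.2 hz₁), hcγ, neg_mul]
  refine ⟨fun z hz => (pgf z hz).tsum_eq, fun k => integral_nonneg_of_ae ?_, ?_⟩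
  · filter_upwards [hsupp] with s hs
    have : 0 ≤ c * s := mul_nonneg hc hs
    positivity
  · simpa [zero_rpow hγ₀.ne'] using pgf 1 ⟨zero_le_one, le_rfl⟩
end

section
/- Let λ > 0 and κ ∈ (0,1). Then for every z ∈ [0,1], exp(−λ(1 − (1−κ)z/(1−κz))) = e^{−λ} + e^{−λ} ∑_{m=1}^∞ (∑_{s=0}^{m−1} (λ^{s+1}/(s+1)!) · C(m−1, s) · κ^{m−s−1} (1−κ)^{s+1}) z^m, where C(m−1,s) denotes the binomial coefficient. In particular the probabilities of the positive discrete stable distribution PDS(1,λ,κ) are P(X=0) = e^{−λ} and P(X=m) = e^{−λ} ∑_{s=0}^{m−1} (λ^{s+1}/(s+1)!) C(m−1,s) κ^{m−s−1}(1−κ)^{s+1} for m ≥ 1. -/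
/-!
With `c = λ(1-κ)z` and `r = κz` the exponent is `-λ + c/(1-r)`. Expanding
`exp (c/(1-r)) - 1 = ∑ₛ (c/(1-r))^(s+1)/(s+1)!` and each `(1-r)^-(s+1) = ∑ⱼ C(s+j,s) rʲ`
gives a double series in `(s, j)`; it converges absolutely for `‖r‖ < 1`, because its norms
form the same series for `‖c‖` and `‖r‖`. Summing it along the antidiagonals `s + j = m`
gives the coefficient of `z^(m+1)`.
-/

open Finset NormedSpace

theorem HasSum.sum_antidiagonal {α : Type*} [AddCommMonoid α] [TopologicalSpace α]
    [ContinuousAdd α] [RegularSpace α] {f : ℕ × ℕ → α} {a : α} (hf : HasSum f a) :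
    HasSum (fun n ↦ ∑ p ∈ antidiagonal n, f p) a :=
  (HasAntidiagonal.sigmaAntidiagonalEquivProd.hasSum_iff.mpr hf).sigma fun n ↦
    sum_coe_sort (antidiagonal n) f ▸ hasSum_fintype _

theorem hasSum_pow_succ_div_factorial {𝔸 : Type*} [NormedField 𝔸] [NormedAlgebra ℚ 𝔸]
    [CompleteSpace 𝔸] (x : 𝔸) :
    HasSum (fun s : ℕ ↦ x ^ (s + 1) / (s + 1).factorial) (exp x - 1) := by
  simpa using (hasSum_nat_add_iff' 1).mpr (expSeries_div_hasSum_exp x)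

section

variable {𝕜 : Type*} [RCLike 𝕜]

def expDivOneSubCoeff (c r : 𝕜) (p : ℕ × ℕ) : 𝕜 :=
  c ^ (p.1 + 1) / (p.1 + 1).factorial * (p.1 + p.2).choose p.1 * r ^ p.2

theorem hasSum_expDivOneSubCoeff_row {c r : 𝕜} (hr : ‖r‖ < 1) (s : ℕ) :
    HasSum (fun j ↦ expDivOneSubCoeff c r (s, j))
      ((c / (1 - r)) ^ (s + 1) / (s + 1).factorial) := by
  rw [div_pow, div_right_comm, ← mul_one_div]
  refine ((hasSum_choose_mul_geometric_of_norm_lt_one s hr).mul_left _).congr_fun fun j ↦ ?_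
  rw [expDivOneSubCoeff, add_comm s j, mul_assoc]

theorem norm_expDivOneSubCoeff (c r : 𝕜) (p : ℕ × ℕ) :
    ‖expDivOneSubCoeff c r p‖ = expDivOneSubCoeff ‖c‖ ‖r‖ p := by
  simp [expDivOneSubCoeff]

theorem summable_expDivOneSubCoeff (c : 𝕜) {r : 𝕜} (hr : ‖r‖ < 1) :
    Summable (expDivOneSubCoeff c r) := by
  refine Summable.of_norm ?_
  simp only [norm_expDivOneSubCoeff]
  have hr' : ‖‖r‖‖ < 1 := by simpa using hr
  rw [summable_prod_of_nonneg fun p ↦ by unfold expDivOneSubCoeff; positivity]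
  refine ⟨fun s ↦ (hasSum_expDivOneSubCoeff_row hr' s).summable, ?_⟩
  simp only [(hasSum_expDivOneSubCoeff_row hr' _).tsum_eq]
  exact (hasSum_pow_succ_div_factorial _).summable

theorem hasSum_expDivOneSubCoeff (c : 𝕜) {r : 𝕜} (hr : ‖r‖ < 1) :
    HasSum (expDivOneSubCoeff c r) (exp (c / (1 - r)) - 1) := by
  have hF := (summable_expDivOneSubCoeff c hr).hasSum
  rwa [(hasSum_pow_succ_div_factorial _).unique
    (hF.prod_fiberwise (hasSum_expDivOneSubCoeff_row hr))]

theorem hasSum_exp_div_one_sub (c : 𝕜) {r : 𝕜} (hr : ‖r‖ < 1) :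
    HasSum (fun m ↦ ∑ s ∈ range (m + 1),
      c ^ (s + 1) / (s + 1).factorial * m.choose s * r ^ (m - s)) (exp (c / (1 - r)) - 1) := by
  convert (hasSum_expDivOneSubCoeff c hr).sum_antidiagonal using 2 with m
  rw [Nat.sum_antidiagonal_eq_sum_range_succ (fun s j ↦ expDivOneSubCoeff c r (s, j))]
  refine sum_congr rfl fun s hs ↦ ?_
  rw [expDivOneSubCoeff, Nat.add_sub_cancel' (mem_range_succ_iff.mp hs)]

end

theorem pds_one_probabilities_general (lam κ : ℝ)
    (hκ : κ ∈ Set.Ioo (0 : ℝ) 1) (z : ℝ) (hz : z ∈ Set.Icc (0 : ℝ) 1) :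
    Real.exp (-lam * (1 - (1 - κ) * z / (1 - κ * z)))
      = Real.exp (-lam) + Real.exp (-lam) *
        ∑' m : ℕ, (∑ s ∈ Finset.range (m + 1),
            lam ^ (s + 1) / (Nat.factorial (s + 1)) * (Nat.choose m s) *
              κ ^ (m - s) * (1 - κ) ^ (s + 1)) * z ^ (m + 1) := by
  obtain ⟨hκ0, hκ1⟩ := hκ
  obtain ⟨hz0, hz1⟩ := hz
  have hκz : ‖κ * z‖ < 1 := by
    rw [Real.norm_of_nonneg (by positivity)]
    nlinarith
  have harg : -lam * (1 - (1 - κ) * z / (1 - κ * z))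
      = -lam + lam * (1 - κ) * z / (1 - κ * z) := by
    ring
  have hterm (m : ℕ) : (∑ s ∈ range (m + 1),
        lam ^ (s + 1) / (Nat.factorial (s + 1)) * (Nat.choose m s) *
          κ ^ (m - s) * (1 - κ) ^ (s + 1)) * z ^ (m + 1)
      = ∑ s ∈ range (m + 1),
        (lam * (1 - κ) * z) ^ (s + 1) / (s + 1).factorial * m.choose s * (κ * z) ^ (m - s) := by
    rw [sum_mul]
    refine sum_congr rfl fun s hs ↦ ?_
    have hzpow : z ^ (m + 1) = z ^ (s + 1) * z ^ (m - s) := by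
      rw [← pow_add]
      congr 1
      have := mem_range_succ_iff.mp hs
      omega
    rw [hzpow, mul_pow, mul_pow, mul_pow]
    ring
  rw [harg, Real.exp_add, tsum_congr hterm, (hasSum_exp_div_one_sub _ hκz).tsum_eq,
    Real.exp_eq_exp_ℝ]
  ring

/-- Power-series expansion of the PGF of the positive discrete stable
distribution `PDS(1,λ,κ)`: its probabilities are `P(X=0) = e^{-λ}` and
`P(X=m) = e^{-λ} ∑_{s=0}^{m-1} (λ^{s+1}/(s+1)!) C(m-1,s) κ^{m-s-1}(1-κ)^{s+1}`. -/
theorem pds_one_probabilities (lam κ : ℝ) (hlam : 0 < lam)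
    (hκ : κ ∈ Set.Ioo (0 : ℝ) 1) (z : ℝ) (hz : z ∈ Set.Icc (0 : ℝ) 1) :
    Real.exp (-lam * (1 - (1 - κ) * z / (1 - κ * z)))
      = Real.exp (-lam) + Real.exp (-lam) *
        ∑' m : ℕ, (∑ s ∈ Finset.range (m + 1),
            lam ^ (s + 1) / (Nat.factorial (s + 1)) * (Nat.choose m s) *
              κ ^ (m - s) * (1 - κ) ^ (s + 1)) * z ^ (m + 1) :=
  pds_one_probabilities_general lam κ hκ z hz
end

section
/- Let λ > 0 and κ ∈ (0,1). Define p₀ = e^{−λ} and p_m = e^{−λ} ∑_{s=0}^{m−1} (λ^{s+1}/(s+1)!) C(m−1,s) κ^{m−s−1}(1−κ)^{s+1} for m ≥ 1. Then for every positive integer n, the n-th factorial moment satisfies ∑_{m=n}^∞ (m!/(m−n)!) · p_m = (κⁿ/(1−κ)ⁿ) · n! · ∑_{s=0}^{n−1} (1/(s+1)!) · C(n−1, s) · (λ/κ)^{s+1}. -/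
/-!
The generating function `exp (-λ (1 - z) / (1 - κ z)) = e^{-λ} exp (λ (1 - κ) z / (1 - κ z))`
exhibits `PDS(1,λ,κ)` as a Poisson(`λ`) sum of geometric variables on `{1, 2, …}`: the term of
index `s` in `p_m` is the Poisson weight `e^{-λ} λ^{s+1}/(s+1)!` times the negative binomial
probability `C(m-1,s) κ^{m-1-s} (1-κ)^{s+1}`. All terms being nonnegative, the two sums can be
exchanged. The identity `C(M,n) C(M-1,s) = ∑_k C(n-1,k) C(s+1,k+1) C(M+k,n+s)` reduces the
`n`-th factorial moment of the negative binomial law to negative binomial series, with value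
`n! ∑_k C(n-1,k) C(s+1,k+1) κ^{n-1-k} / (1-κ)^n`; finally the Poisson average of `C(s+1,k+1)`
is `λ^{k+1}/(k+1)!`.
-/

open Finset

namespace Nat

theorem sum_range_choose_mul_choose_add (c n r : ℕ) :
    ∑ e ∈ range (c + 1), c.choose e * n.choose (r + e) = (c + n).choose (c + r) := by
  rw [add_choose_eq, Nat.sum_antidiagonal_eq_sum_range_succ_mk,
    ← sum_range_add_sum_Ico _ (by omega : c + 1 ≤ (c + r).succ),
    sum_eq_zero (s := Ico _ _) fun i hi ↦ by
      rw [choose_eq_zero_of_lt (n := c) (by simp only [mem_Ico] at hi; omega), zero_mul], add_zero]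
  conv_rhs => rw [← sum_range_reflect]
  refine sum_congr rfl fun e he ↦ ?_
  have he : e ≤ c := by rw [mem_range] at he; omega
  rw [add_tsub_cancel_right, choose_symm he, show c + r - (c - e) = r + e by omega]

theorem sum_range_choose_mul_choose_succ_mul_choose {a b x y : ℕ} (h : x + y = a + b + 1) :
    ∑ k ∈ range (a + 1), a.choose k * (b + 1).choose (k + 1) * k.choose y
      = a.choose y * x.choose (a + 1) := by
  rcases le_or_gt y a with hy | hy
  · obtain ⟨c, rfl⟩ := Nat.exists_eq_add_of_le hy
    obtain rfl : x = c + (b + 1) := by omega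
    rw [show y + c + 1 = y + (c + 1) by omega, sum_range_add,
      sum_eq_zero fun k hk ↦ by rw [choose_eq_zero_of_lt (n := k) (by simpa using hk), mul_zero],
      zero_add]
    calc ∑ e ∈ range (c + 1), (y + c).choose (y + e) * (b + 1).choose (y + e + 1) * (y + e).choose y
        = ∑ e ∈ range (c + 1), (y + c).choose y * (c.choose e * (b + 1).choose (y + 1 + e)) := by
          refine sum_congr rfl fun e _ ↦ ?_
          rw [mul_right_comm, choose_mul (by omega), add_tsub_cancel_left, add_tsub_cancel_left,
            add_right_comm]
          ring
      _ = (y + c).choose y * (c + (b + 1)).choose (y + c + 1) := by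
          rw [← mul_sum, sum_range_choose_mul_choose_add, show c + (y + 1) = y + c + 1 by omega]
  · rw [sum_eq_zero fun k hk ↦ by
      rw [choose_eq_zero_of_lt (n := k) (by rw [mem_range] at hk; omega), mul_zero],
      choose_eq_zero_of_lt hy, zero_mul]

theorem choose_add_succ_mul_choose_eq_sum (d a b : ℕ) :
    (d + a + 1).choose (a + 1) * (d + a).choose b
      = ∑ k ∈ range (a + 1),
          a.choose k * (b + 1).choose (k + 1) * (d + a + 1 + k).choose (a + b + 1) := by
  have vandermonde : ∀ k, (d + a + 1 + k).choose (a + b + 1)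
      = ∑ i ∈ range (a + b + 2), (d + a + 1).choose i * k.choose (a + b + 1 - i) := fun k ↦ by
    rw [add_choose_eq, Nat.sum_antidiagonal_eq_sum_range_succ_mk]
  simp_rw [vandermonde, mul_sum, sum_comm (s := range (a + 1))]
  calc (d + a + 1).choose (a + 1) * (d + a).choose b
      = ∑ u ∈ range (b + 1),
          (d + a + 1).choose (a + 1 + u) * a.choose (b - u) * (a + 1 + u).choose (a + 1) := by
        rw [add_choose_eq d a b, Nat.sum_antidiagonal_eq_sum_range_succ_mk, mul_sum]
        refine sum_congr rfl fun u _ ↦ ?_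
        rw [mul_right_comm, choose_mul (by omega), add_tsub_cancel_left,
          show d + a + 1 - (a + 1) = d by omega]
        ring
    _ = ∑ i ∈ range (a + b + 2),
          (d + a + 1).choose i * a.choose (a + b + 1 - i) * i.choose (a + 1) := by
        rw [show a + b + 2 = (a + 1) + (b + 1) by omega, sum_range_add _ (a + 1) (b + 1),
          sum_eq_zero (s := range (a + 1)) fun i hi ↦ by
            rw [choose_eq_zero_of_lt (n := i) (by simpa using hi), mul_zero], zero_add]
        refine sum_congr rfl fun u hu ↦ ?_
        rw [show a + b + 1 - (a + 1 + u) = b - u by omega]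
    _ = _ := by
        refine sum_congr rfl fun i hi ↦ ?_
        rw [mul_assoc, ← sum_range_choose_mul_choose_succ_mul_choose (a := a) (b := b) (x := i)
          (y := a + b + 1 - i) (by rw [mem_range] at hi; omega), mul_sum]
        refine sum_congr rfl fun k _ ↦ ?_
        ring

end Nat

theorem hasSum_choose_mul_geometric_of_le {𝕜 : Type*} [NormedField 𝕜] [CompleteSpace 𝕜]
    {c d : ℕ} (hcd : c ≤ d) (e : ℕ) {r : 𝕜} (hr : ‖r‖ < 1) :
    HasSum (fun m ↦ ((m + c).choose d : 𝕜) * r ^ (m + c + e - d)) (r ^ e / (1 - r) ^ (d + 1)) := by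
  rw [← hasSum_nat_add_iff' (d - c), sum_eq_zero fun m hm ↦ by
    rw [Nat.choose_eq_zero_of_lt (by rw [mem_range] at hm; omega), Nat.cast_zero, zero_mul],
    sub_zero, div_eq_mul_one_div]
  refine (hasSum_choose_mul_geometric_of_norm_lt_one d hr).mul_left (r ^ e) |>.congr_fun fun m ↦ ?_
  rw [show m + (d - c) + c = m + d by omega, show m + d + e - d = e + m by omega, pow_add]
  ring

theorem Real.hasSum_choose_mul_pow_div_factorial (x : ℝ) (k : ℕ) :
    HasSum (fun j ↦ (j.choose k : ℝ) * x ^ j / j.factorial) (x ^ k / k.factorial * Real.exp x) := by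
  rw [← hasSum_nat_add_iff' k, sum_eq_zero fun j hj ↦ by
    rw [Nat.choose_eq_zero_of_lt (by simpa using hj), Nat.cast_zero, zero_mul, zero_div], sub_zero]
  refine (Real.exp_eq_exp_ℝ ▸ NormedSpace.expSeries_div_hasSum_exp x).mul_left
    (x ^ k / k.factorial) |>.congr_fun fun j ↦ ?_
  have hchoose : ((j + k).choose k : ℝ) ≠ 0 := by
    exact_mod_cast (Nat.choose_pos (Nat.le_add_left k j)).ne'
  rw [← Nat.add_choose_mul_factorial_mul_factorial j k, pow_add]
  push_cast
  field_simp

theorem HasSum.tsum_comm_of_nonneg {β γ : Type*} {f : β → γ → ℝ} {g : β → ℝ} {a : ℝ}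
    (hg : HasSum g a) (hf : ∀ b c, 0 ≤ f b c) (hfg : ∀ b, HasSum (f b) (g b)) :
    HasSum (fun c ↦ ∑' b, f b c) a := by
  have hsum : Summable (Function.uncurry f) := by
    refine (summable_prod_of_nonneg fun p ↦ hf p.1 p.2).2 ⟨fun b ↦ (hfg b).summable, ?_⟩
    simpa only [Function.uncurry_apply_pair, fun b ↦ (hfg b).tsum_eq] using hg.summable
  have htot : HasSum (Function.uncurry f) a := by
    simpa only [(hsum.hasSum.prod_fiberwise hfg).unique hg] using hsum.hasSum
  refine ((Equiv.prodComm γ β).hasSum_iff.2 htot).prod_fiberwise fun c ↦ ?_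
  exact (hsum.comp_injective (Equiv.prodComm γ β).injective).prod_factor c |>.hasSum

theorem factorial_div_factorial_mul_choose_eq_sum {K : Type*} [Field K] [CharZero K]
    (m a s : ℕ) :
    ((m + a + 1).factorial / m.factorial : K) * (m + a).choose s
      = ∑ k ∈ range (a + 1), ((a + 1).factorial * a.choose k * (s + 1).choose (k + 1) : K) *
          (m + a + 1 + k).choose (a + s + 1) := by
  have hfac : ((m + a + 1).factorial : K)
      = (m + a + 1).choose (a + 1) * m.factorial * (a + 1).factorial := by
    exact_mod_cast (Nat.add_choose_mul_factorial_mul_factorial m (a + 1)).symm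
  calc _ = ((a + 1).factorial : K) * (((m + a + 1).choose (a + 1) * (m + a).choose s : ℕ) : K) := by
        have : (m.factorial : K) ≠ 0 := Nat.cast_ne_zero.2 m.factorial_ne_zero
        rw [hfac]; push_cast; field_simp
    _ = _ := by
        rw [Nat.choose_add_succ_mul_choose_eq_sum]
        push_cast
        rw [mul_sum]
        exact sum_congr rfl fun k _ ↦ by ring

theorem hasSum_factorialMoment_negBinomial {n : ℕ} (hn : 0 < n) (s : ℕ) {κ : ℝ} (hκ : |κ| < 1) :
    HasSum (fun m : ℕ ↦ ((m + n).factorial / m.factorial : ℝ) *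
        (((m + n - 1).choose s : ℝ) * κ ^ (m + n - 1 - s) * (1 - κ) ^ (s + 1)))
      (∑ k ∈ range n, n.factorial * ((n - 1).choose k : ℝ) * κ ^ (n - 1 - k) / (1 - κ) ^ n *
        (s + 1).choose (k + 1)) := by
  obtain ⟨a, rfl⟩ : ∃ a, n = a + 1 := ⟨n - 1, by omega⟩
  simp only [← add_assoc, Nat.add_sub_cancel]
  have h1κ : 1 - κ ≠ 0 := by linarith [le_abs_self κ]
  let w : ℕ → ℝ := fun k ↦
    (a + 1).factorial * a.choose k * (s + 1).choose (k + 1) * (1 - κ) ^ (s + 1)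
  have hterm : ∀ k ∈ range (a + 1), HasSum
      (fun m ↦ w k *
        ((m + (a + 1 + k)).choose (a + s + 1) * κ ^ (m + (a + 1 + k) + (a - k) - (a + s + 1))))
      (w k * (κ ^ (a - k) / (1 - κ) ^ (a + s + 1 + 1))) := fun k _ ↦ by
    rcases le_or_gt k s with hks | hks
    · exact (hasSum_choose_mul_geometric_of_le (c := a + 1 + k) (d := a + s + 1) (by omega)
        (a - k) (by rwa [Real.norm_eq_abs])).mul_left (w k)
    · simp [w, Nat.choose_eq_zero_of_lt (by omega : s + 1 < k + 1)]
  convert hasSum_sum hterm using 1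
  · funext m
    rw [← mul_assoc, ← mul_assoc, factorial_div_factorial_mul_choose_eq_sum, sum_mul, sum_mul]
    refine sum_congr rfl fun k hk ↦ ?_
    rw [show m + (a + 1 + k) + (a - k) - (a + s + 1) = m + a - s by rw [mem_range] at hk; omega,
      ← add_assoc, ← add_assoc]
    ring
  · refine sum_congr rfl fun k _ ↦ ?_
    rw [show a + s + 1 + 1 = (a + 1) + (s + 1) by ring]
    field_simp
    ring

theorem Real.hasSum_poisson_mul_sum_choose_succ (x : ℝ) (c : ℕ → ℝ) (n : ℕ) :
    HasSum (fun s ↦ Real.exp (-x) * x ^ (s + 1) / (s + 1).factorial *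
        ∑ k ∈ range n, c k * (s + 1).choose (k + 1))
      (∑ k ∈ range n, c k * (x ^ (k + 1) / (k + 1).factorial)) := by
  simp_rw [mul_sum]
  refine hasSum_sum fun k _ ↦ ?_
  have h := (hasSum_nat_add_iff' 1).2 (Real.hasSum_choose_mul_pow_div_factorial x (k + 1))
  simp only [range_one, sum_singleton, Nat.choose_zero_succ, Nat.cast_zero, zero_mul, zero_div,
    sub_zero] at h
  have hval : c k * (x ^ (k + 1) / (k + 1).factorial)
      = Real.exp (-x) * c k * (x ^ (k + 1) / (k + 1).factorial * Real.exp x) := by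
    rw [Real.exp_neg]; field_simp
  rw [hval]
  exact (h.mul_left (Real.exp (-x) * c k)).congr_fun fun s ↦ by ring

/-- Factorial moments of the positive discrete stable distribution
`PDS(1,λ,κ)`: with `p_m = e^{-λ} ∑_{s=0}^{m-1} (λ^{s+1}/(s+1)!) C(m-1,s)
κ^{m-s-1}(1-κ)^{s+1}` for `m ≥ 1`, the `n`-th factorial moment equals
`(κ/(1-κ))ⁿ n! ∑_{s=0}^{n-1} (1/(s+1)!) C(n-1,s) (λ/κ)^{s+1}`. -/
theorem pds_one_factorial_moments (lam κ : ℝ) (hlam : 0 < lam)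
    (hκ : κ ∈ Set.Ioo (0 : ℝ) 1) (n : ℕ) (hn : 0 < n) :
    ∑' m : ℕ, ((Nat.factorial (m + n) : ℝ) / (Nat.factorial m)) *
        (Real.exp (-lam) * ∑ s ∈ Finset.range (m + n),
          lam ^ (s + 1) / (Nat.factorial (s + 1)) * (Nat.choose (m + n - 1) s) *
            κ ^ (m + n - 1 - s) * (1 - κ) ^ (s + 1))
      = κ ^ n / (1 - κ) ^ n * (Nat.factorial n) *
        ∑ s ∈ Finset.range n, (1 : ℝ) / (Nat.factorial (s + 1)) *
          (Nat.choose (n - 1) s) * (lam / κ) ^ (s + 1) := by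
  obtain ⟨hκ0, hκ1⟩ := hκ
  have h1κ : 0 < 1 - κ := sub_pos.2 hκ1
  let f : ℕ → ℕ → ℝ := fun s m ↦ Real.exp (-lam) * lam ^ (s + 1) / (s + 1).factorial *
    (((m + n).factorial / m.factorial : ℝ) *
      (((m + n - 1).choose s : ℝ) * κ ^ (m + n - 1 - s) * (1 - κ) ^ (s + 1)))
  have hrow := fun s ↦ (hasSum_factorialMoment_negBinomial hn s
    (abs_lt.2 ⟨by linarith, hκ1⟩)).mul_left (Real.exp (-lam) * lam ^ (s + 1) / (s + 1).factorial)
  have htot := (Real.hasSum_poisson_mul_sum_choose_succ lam _ n).tsum_comm_of_nonneg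
    (f := f) (fun s m ↦ by positivity) hrow
  calc _ = ∑' m, ∑' s, f s m := tsum_congr fun m ↦ by
        rw [tsum_eq_sum (s := range (m + n)) fun s hs ↦ by
          simp [f, Nat.choose_eq_zero_of_lt (by rw [mem_range] at hs; omega : m + n - 1 < s)],
          mul_sum, mul_sum]
        exact sum_congr rfl fun s _ ↦ by ring
    _ = _ := htot.tsum_eq
    _ = _ := by
      rw [mul_sum]
      refine sum_congr rfl fun k hk ↦ ?_
      rw [show κ ^ n = κ ^ (n - 1 - k) * κ ^ (k + 1) by
        rw [← pow_add]; congr 1; rw [mem_range] at hk; omega, div_pow]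
      field_simp
end

section
/- Let γ ∈ (0,1), b > 0, κ ∈ [0,1). Then for every t ∈ ℝ, lim_{a→0⁺} exp(−(b/a^γ)·((1 − e^{iat})/(1 − κe^{iat}))^γ) = exp(−(b/(1−κ)^γ)·(−it)^γ), where all complex powers are principal branch powers. Moreover (−it)^γ = |t|^γ cos(πγ/2)(1 − i·sgn(t)·tan(πγ/2)), so the limit is the characteristic function of a totally skewed stable law with index γ, skewness β = 1, and scale σ = (b/(1−κ)^γ)cos(πγ/2). -/
/-!
For `a > 0` the exponent `(b / a^γ) w(a)^γ`, with `w(a) = (1 - e^{iat}) / (1 - κ e^{iat})`, equals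
`b (w(a) / a)^γ`, because principal powers are multiplicative against a positive real factor.
As `a → 0⁺`, `w(a) / a → -it / (1 - κ)` (the derivative of `a ↦ e^{iat}` at `0`), a point of the
closed right half-plane, where `z ↦ z^γ` is continuous for `γ > 0`. The closed form of `(-it)^γ`
comes from `log (∓i) = ∓iπ/2`.
-/

open Complex Filter Topology

lemma Complex.ofReal_mul_cpow_s18 {r : ℝ} (hr : 0 < r) (x y : ℂ) :
    ((r : ℂ) * x) ^ y = (r : ℂ) ^ y * x ^ y := by
  rcases eq_or_ne x 0 with rfl | hx
  · rcases eq_or_ne y 0 with rfl | hy <;> simp [*]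
  have hr' : (r : ℂ) ≠ 0 := ofReal_ne_zero.mpr hr.ne'
  rw [cpow_def_of_ne_zero (mul_ne_zero hr' hx), log_ofReal_mul hr hx, add_mul, exp_add,
    ← cpow_def_of_ne_zero hx, ofReal_log hr.le, ← cpow_def_of_ne_zero hr']

lemma ofReal_div_rpow_mul_cpow {r : ℝ} (hr : 0 < r) (b γ : ℝ) (w : ℂ) :
    ((b / r ^ γ : ℝ) : ℂ) * w ^ (γ : ℂ) = b * (w / r) ^ (γ : ℂ) := by
  rw [div_eq_inv_mul w, ← ofReal_inv, ofReal_mul_cpow_s18 (inv_pos.mpr hr),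
    ← ofReal_cpow (inv_nonneg.mpr hr.le), Real.inv_rpow hr.le]
  push_cast
  ring

lemma tendsto_one_sub_cexp_mul_div (c : ℂ) :
    Tendsto (fun a : ℝ => (1 - cexp (c * a)) / a) (𝓝[≠] 0) (𝓝 (-c)) := by
  have hderiv : HasDerivAt (fun a : ℝ => cexp (c * a)) c 0 := by
    simpa using ((hasDerivAt_id (0 : ℝ)).ofReal_comp.const_mul c).cexp
  refine (hasDerivAt_iff_tendsto_slope.mp hderiv).neg.congr fun a => ?_
  rw [slope_def_module]
  simp only [sub_zero, ofReal_zero, mul_zero, exp_zero, real_smul, ofReal_inv]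
  ring

theorem tendsto_cexp_neg_div_rpow_mul_cpow {γ κ : ℝ} (hγ : 0 < γ) (hκ : κ < 1) (b : ℝ) {c : ℂ}
    (hc : c.re ≤ 0) :
    Tendsto (fun a : ℝ => cexp (-((b / a ^ γ : ℝ) : ℂ) *
        ((1 - cexp (c * a)) / (1 - κ * cexp (c * a))) ^ (γ : ℂ)))
      (𝓝[>] 0) (𝓝 (cexp (-((b / (1 - κ) ^ γ : ℝ) : ℂ) * (-c) ^ (γ : ℂ)))) := by
  have h1κ : 0 < 1 - κ := sub_pos.mpr hκ
  have hden : Tendsto (fun a : ℝ => 1 - κ * cexp (c * a)) (𝓝[>] 0) (𝓝 ((1 - κ : ℝ) : ℂ)) :=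
    (Continuous.tendsto' (by fun_prop) 0 _ (by simp)).mono_left nhdsWithin_le_nhds
  have hratio : Tendsto (fun a : ℝ => (1 - cexp (c * a)) / (1 - κ * cexp (c * a)) / a)
      (𝓝[>] 0) (𝓝 (-c / (1 - κ : ℝ))) :=
    ((tendsto_one_sub_cexp_mul_div c).mono_left (nhdsGT_le_nhdsNE 0)).div hden
      (ofReal_ne_zero.mpr h1κ.ne') |>.congr fun a => div_right_comm _ _ _
  have hlim_re : 0 ≤ (-c / (1 - κ : ℝ)).re := by
    rw [div_ofReal_re, neg_re]
    exact div_nonneg (neg_nonneg.mpr hc) h1κ.le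
  have hcpow := (continuousAt_cpow_const_of_re_pos (Or.inl hlim_re)
    (by simpa using hγ) : ContinuousAt (· ^ (γ : ℂ)) _).tendsto.comp hratio
  rw [neg_mul, ofReal_div_rpow_mul_cpow h1κ]
  refine ((hcpow.const_mul (b : ℂ)).neg.cexp).congr' ?_
  filter_upwards [self_mem_nhdsWithin] with a (ha : 0 < a)
  rw [neg_mul, ofReal_div_rpow_mul_cpow ha]
  rfl

lemma Complex.I_cpow_ofReal (γ : ℝ) :
    I ^ (γ : ℂ) = Real.cos (Real.pi * γ / 2) + Real.sin (Real.pi * γ / 2) * I := by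
  rw [cpow_def_of_ne_zero I_ne_zero, log_I,
    show (Real.pi / 2 * I * γ : ℂ) = ((Real.pi * γ / 2 : ℝ) : ℂ) * I by push_cast; ring,
    exp_mul_I, ofReal_cos, ofReal_sin]

lemma Complex.neg_I_cpow_ofReal (γ : ℝ) :
    (-I) ^ (γ : ℂ) = Real.cos (Real.pi * γ / 2) - Real.sin (Real.pi * γ / 2) * I := by
  rw [cpow_def_of_ne_zero (neg_ne_zero.mpr I_ne_zero), log_neg_I,
    show (-(Real.pi / 2) * I * γ : ℂ) = ((-(Real.pi * γ / 2) : ℝ) : ℂ) * I by push_cast; ring,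
    exp_mul_I, ofReal_neg, cos_neg, sin_neg, ofReal_cos, ofReal_sin]
  ring

lemma Complex.neg_I_mul_ofReal_cpow {γ : ℝ} (hγ : Real.cos (Real.pi * γ / 2) ≠ 0) (t : ℝ) :
    (-(I * t)) ^ (γ : ℂ) = ((|t| ^ γ : ℝ) : ℂ) * ((Real.cos (Real.pi * γ / 2) : ℝ) : ℂ) *
      (1 - I * ((Real.sign t : ℝ) : ℂ) * ((Real.tan (Real.pi * γ / 2) : ℝ) : ℂ)) := by
  have hcos_mul_tan : Real.cos (Real.pi * γ / 2) * Real.tan (Real.pi * γ / 2)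
      = Real.sin (Real.pi * γ / 2) := by
    rw [Real.tan_eq_sin_div_cos, mul_div_cancel₀ _ hγ]
  rcases lt_trichotomy t 0 with ht | rfl | ht
  · rw [show -(I * t) = ((|t| : ℝ) : ℂ) * I by rw [abs_of_neg ht]; push_cast; ring,
      ofReal_mul_cpow_s18 (abs_pos.mpr ht.ne), ← ofReal_cpow (abs_nonneg t), I_cpow_ofReal,
      Real.sign_of_neg ht, ← hcos_mul_tan]
    push_cast
    ring
  · rcases eq_or_ne γ 0 with rfl | hγ0 <;> simp [*]
  · rw [show -(I * t) = ((|t| : ℝ) : ℂ) * -I by rw [abs_of_pos ht]; ring,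
      ofReal_mul_cpow_s18 (abs_pos.mpr ht.ne'), ← ofReal_cpow (abs_nonneg t), neg_I_cpow_ofReal,
      Real.sign_of_pos ht, ← hcos_mul_tan]
    push_cast
    ring

open Filter in
theorem pds_continuous_analogy_general (γ b κ : ℝ)
    (hγ : γ ∈ Set.Ioo (0 : ℝ) 1) (hκ : κ ∈ Set.Ico (0 : ℝ) 1) (t : ℝ) :
    Filter.Tendsto
      (fun a : ℝ =>
        Complex.exp (-((b / a ^ γ : ℝ) : ℂ) *
          ((1 - Complex.exp (Complex.I * (a : ℂ) * (t : ℂ))) /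
            (1 - (κ : ℂ) * Complex.exp (Complex.I * (a : ℂ) * (t : ℂ)))) ^ (γ : ℂ)))
      (nhdsWithin 0 (Set.Ioi (0 : ℝ)))
      (nhds (Complex.exp (-((b / (1 - κ) ^ γ : ℝ) : ℂ) *
        (-(Complex.I * (t : ℂ))) ^ (γ : ℂ)))) ∧
    (-(Complex.I * (t : ℂ))) ^ (γ : ℂ)
      = ((|t| ^ γ : ℝ) : ℂ) * ((Real.cos (Real.pi * γ / 2) : ℝ) : ℂ) *
        (1 - Complex.I * ((Real.sign t : ℝ) : ℂ) * ((Real.tan (Real.pi * γ / 2) : ℝ) : ℂ)) := by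
  have hcos : 0 < Real.cos (Real.pi * γ / 2) :=
    Real.cos_pos_of_mem_Ioo ⟨by nlinarith [Real.pi_pos, hγ.1], by nlinarith [Real.pi_pos, hγ.2]⟩
  have hcomm : ∀ a : ℝ, I * a * t = I * t * a := fun a => mul_right_comm _ _ _
  simp only [hcomm]
  exact ⟨tendsto_cexp_neg_div_rpow_mul_cpow hγ.1 hκ.2 b (by simp), neg_I_mul_ofReal_cpow hcos.ne' t⟩

open Filter in
/-- Continuous analogy for `PDS(γ, b/a^γ, κ)`: as `a → 0⁺` the characteristic
function of the rescaled variable converges to that of a totally skewed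
`γ`-stable law, `exp(-(b/(1-κ)^γ)(-it)^γ)`, and
`(-it)^γ = |t|^γ cos(πγ/2)(1 - i sgn(t) tan(πγ/2))` (principal branch). -/
theorem pds_continuous_analogy (γ b κ : ℝ)
    (hγ : γ ∈ Set.Ioo (0 : ℝ) 1) (hb : 0 < b) (hκ : κ ∈ Set.Ico (0 : ℝ) 1) (t : ℝ) :
    Filter.Tendsto
      (fun a : ℝ =>
        Complex.exp (-((b / a ^ γ : ℝ) : ℂ) *
          ((1 - Complex.exp (Complex.I * (a : ℂ) * (t : ℂ))) /
            (1 - (κ : ℂ) * Complex.exp (Complex.I * (a : ℂ) * (t : ℂ)))) ^ (γ : ℂ)))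
      (nhdsWithin 0 (Set.Ioi (0 : ℝ)))
      (nhds (Complex.exp (-((b / (1 - κ) ^ γ : ℝ) : ℂ) *
        (-(Complex.I * (t : ℂ))) ^ (γ : ℂ)))) ∧
    (-(Complex.I * (t : ℂ))) ^ (γ : ℂ)
      = ((|t| ^ γ : ℝ) : ℂ) * ((Real.cos (Real.pi * γ / 2) : ℝ) : ℂ) *
        (1 - Complex.I * ((Real.sign t : ℝ) : ℂ) * ((Real.tan (Real.pi * γ / 2) : ℝ) : ℂ)) :=
  pds_continuous_analogy_general γ b κ hγ hκ t
end

section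
/- Let γ ∈ (0,1], λ > 0, κ ∈ [0,1). Then for every t ∈ ℝ, lim_{n→∞} exp(−λ·n·(((1 − cos(t·n^{−1/(2γ)}))(1+κ))/(κ² − 2κ·cos(t·n^{−1/(2γ)}) + 1))^γ) = exp(−(λ/2^γ)·((1+κ)^γ/(1−κ)^{2γ})·|t|^{2γ}). -/
/-!
Write `ψ(u) = (1 - cos u)(1 + κ)/(κ² - 2κ cos u + 1)`. Since `1 - cos u = 2 sin²(u/2)`,
`ψ(u) = u² g(u)` with `g` continuous, nonnegative and `g(0) = (1 + κ)/(2(1 - κ)²)`.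
For `u = t n^{-1/(2γ)}` this gives exactly `n ψ(u)^γ = (t² g(u))^γ`, which tends to
`(t² g(0))^γ` as `n → ∞`.
-/

open Filter Real Topology

lemma one_sub_cos_eq_sq_mul_sinc_sq (u : ℝ) : 1 - cos u = u ^ 2 * (sinc (u / 2) ^ 2 / 2) := by
  rcases eq_or_ne u 0 with rfl | hu
  · simp
  have hcos : cos u = 1 - 2 * sin (u / 2) ^ 2 := by
    have h := cos_two_mul (u / 2)
    rw [show 2 * (u / 2) = u by ring] at h
    rw [h, sin_sq]; ring
  rw [sinc_of_ne_zero (div_ne_zero hu two_ne_zero), hcos]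
  field_simp
  ring

lemma sq_sub_two_mul_mul_cos_add_one_pos {κ : ℝ} (hκ : |κ| < 1) (u : ℝ) :
    0 < κ ^ 2 - 2 * κ * cos u + 1 := by
  have : κ * cos u ≤ |κ| :=
    calc κ * cos u ≤ |κ * cos u| := le_abs_self _
      _ ≤ |κ| := by rw [abs_mul]; exact mul_le_of_le_one_right (abs_nonneg κ) (abs_cos_le_one u)
  nlinarith [sq_abs κ]

lemma tendsto_natCast_mul_rpow_of_eq_sq_mul {f g : ℝ → ℝ} {γ : ℝ} (hγ : 0 < γ)
    (hf : ∀ u, f u = u ^ 2 * g u) (hg : ContinuousAt g 0) (hg_nonneg : ∀ u, 0 ≤ g u) (t : ℝ) :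
    Tendsto (fun n : ℕ => n * f (t * (n : ℝ) ^ (-(1 / (2 * γ)))) ^ γ) atTop
      (𝓝 ((t ^ 2 * g 0) ^ γ)) := by
  set u : ℕ → ℝ := fun n => t * (n : ℝ) ^ (-(1 / (2 * γ)))
  have hu : Tendsto u atTop (𝓝 0) := by
    simpa using ((tendsto_rpow_neg_atTop (by positivity)).comp
      tendsto_natCast_atTop_atTop).const_mul t
  have hlim : Tendsto (fun n => (t ^ 2 * g (u n)) ^ γ) atTop (𝓝 ((t ^ 2 * g 0) ^ γ)) :=
    ((continuousAt_const.mul hg).rpow_const (Or.inr hγ.le)).tendsto.comp hu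
  refine hlim.congr' ?_
  filter_upwards [eventually_gt_atTop 0] with n hn
  have hn : (0 : ℝ) < n := by exact_mod_cast hn
  have hfu : f (u n) = (n : ℝ) ^ (-γ⁻¹) * (t ^ 2 * g (u n)) := by
    rw [hf, mul_pow, ← rpow_mul_natCast hn.le]
    field_simp
    ring_nf
  rw [hfu, mul_rpow (rpow_nonneg hn.le _) (mul_nonneg (sq_nonneg t) (hg_nonneg _)),
    ← rpow_mul hn.le, neg_mul, inv_mul_cancel₀ hγ.ne', rpow_neg_one, mul_inv_cancel_left₀ hn.ne']

noncomputable def sdsSymbol (κ u : ℝ) : ℝ :=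
  (1 - cos u) * (1 + κ) / (κ ^ 2 - 2 * κ * cos u + 1)

/-- `sdsSymbol κ u / u ^ 2`, extended continuously to `u = 0`. -/
noncomputable def sdsSymbolRatio (κ u : ℝ) : ℝ :=
  sinc (u / 2) ^ 2 / 2 * ((1 + κ) / (κ ^ 2 - 2 * κ * cos u + 1))

lemma sdsSymbol_eq_sq_mul_sdsSymbolRatio (κ u : ℝ) :
    sdsSymbol κ u = u ^ 2 * sdsSymbolRatio κ u := by
  rw [sdsSymbol, sdsSymbolRatio, one_sub_cos_eq_sq_mul_sinc_sq]
  ring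

section

variable {κ : ℝ} (hκ : |κ| < 1)
include hκ

lemma continuous_sdsSymbolRatio : Continuous (sdsSymbolRatio κ) :=
  ((continuous_sinc.comp (continuous_id.div_const 2)).pow 2 |>.div_const 2).mul
    (continuous_const.div (by fun_prop) fun u => (sq_sub_two_mul_mul_cos_add_one_pos hκ u).ne')

lemma sdsSymbolRatio_nonneg (u : ℝ) : 0 ≤ sdsSymbolRatio κ u := by
  have : 0 ≤ 1 + κ := by linarith [neg_abs_le κ]
  have := sq_sub_two_mul_mul_cos_add_one_pos hκ u
  unfold sdsSymbolRatio
  positivity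

lemma sq_mul_sdsSymbolRatio_zero_rpow (γ t : ℝ) :
    (t ^ 2 * sdsSymbolRatio κ 0) ^ γ =
      (1 + κ) ^ γ / (1 - κ) ^ (2 * γ) * |t| ^ (2 * γ) / 2 ^ γ := by
  obtain ⟨hκ₀, hκ₁⟩ := abs_lt.1 hκ
  have h1 : 0 ≤ 1 + κ := by linarith
  have hsq (x : ℝ) (hx : 0 ≤ x) : (x ^ 2) ^ γ = x ^ (2 * γ) := by
    rw [← rpow_natCast, ← rpow_mul hx]; norm_num
  have h : t ^ 2 * sdsSymbolRatio κ 0 = (1 + κ) / (1 - κ) ^ 2 * |t| ^ 2 / 2 := by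
    rw [sdsSymbolRatio, zero_div, sinc_zero, cos_zero, sq_abs,
      show κ ^ 2 - 2 * κ * 1 + 1 = (1 - κ) ^ 2 by ring]
    ring
  rw [h, div_rpow (by positivity) zero_le_two, mul_rpow (by positivity) (by positivity),
    div_rpow h1 (by positivity), hsq _ (by linarith), hsq _ (abs_nonneg t)]

end

theorem sds_domain_of_attraction_general (γ lam κ : ℝ)
    (hγ : γ ∈ Set.Ioc (0 : ℝ) 1) (hκ : κ ∈ Set.Ico (0 : ℝ) 1) (t : ℝ) :
    Filter.Tendsto
      (fun n : ℕ =>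
        Real.exp (-lam * n *
          (((1 - Real.cos (t * (n : ℝ) ^ (-(1 / (2 * γ))))) * (1 + κ)) /
            (κ ^ 2 - 2 * κ * Real.cos (t * (n : ℝ) ^ (-(1 / (2 * γ)))) + 1)) ^ γ))
      Filter.atTop
      (nhds (Real.exp (-(lam / 2 ^ γ) * ((1 + κ) ^ γ / (1 - κ) ^ (2 * γ)) * |t| ^ (2 * γ)))) := by
  have hκ' : |κ| < 1 := abs_lt.2 ⟨by linarith [hκ.1], hκ.2⟩
  have key := tendsto_natCast_mul_rpow_of_eq_sq_mul hγ.1 (sdsSymbol_eq_sq_mul_sdsSymbolRatio κ)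
    (continuous_sdsSymbolRatio hκ').continuousAt (sdsSymbolRatio_nonneg hκ') t
  rw [sq_mul_sdsSymbolRatio_zero_rpow hκ'] at key
  convert (continuous_exp.tendsto _).comp (key.const_mul (-lam)) using 2 with n
  · simp only [Function.comp_apply, sdsSymbol, mul_assoc]
  · congr 1; ring

/-- The symmetric discrete stable distribution `SDS(γ,λ,κ)` belongs to the
domain of normal attraction of the symmetric `2γ`-stable law: the
characteristic function of `(X₁+⋯+Xₙ)/n^{1/(2γ)}` converges pointwise to
`exp(-(λ/2^γ)((1+κ)^γ/(1-κ)^{2γ})|t|^{2γ})`. -/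
theorem sds_domain_of_attraction (γ lam κ : ℝ)
    (hγ : γ ∈ Set.Ioc (0 : ℝ) 1) (hlam : 0 < lam) (hκ : κ ∈ Set.Ico (0 : ℝ) 1) (t : ℝ) :
    Filter.Tendsto
      (fun n : ℕ =>
        Real.exp (-lam * n *
          (((1 - Real.cos (t * (n : ℝ) ^ (-(1 / (2 * γ))))) * (1 + κ)) /
            (κ ^ 2 - 2 * κ * Real.cos (t * (n : ℝ) ^ (-(1 / (2 * γ)))) + 1)) ^ γ))
      Filter.atTop
      (nhds (Real.exp (-(lam / 2 ^ γ) * ((1 + κ) ^ γ / (1 - κ) ^ (2 * γ)) * |t| ^ (2 * γ)))) :=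
  sds_domain_of_attraction_general γ lam κ hγ hκ t
end
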